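/- arXiv:1603.03942 — 6 statements merged into one kernel-verified Lean document; each statement's English description precedes it below -/
import Mathlib

section
/- Let V be a finite set, ε : V → {0,1}, and M : V × V → ℕ with M(u,v) = 0 whenever ε(u) = ε(v), and M(u,v)·M(v,u) = 0 for all u, v (so M is the arrow-multiplicity matrix of a bipartite quiver without 2-cycles). Define symmetric matrices A, B : V × V → ℕ by: A(u,v) = M(u,v) if ε(u) = 0 and ε(v) = 1, A(u,v) = M(v,u) if ε(u) = 1 and ε(v) = 0, and A(u,v) = 0 otherwise; B(u,v) = M(u,v) if ε(u) = 1 and ε(v) = 0, B(u,v) = M(v,u) if ε(u) = 0 and ε(v) = 1, and B(u,v) = 0 otherwise. Then the following are equivalent: (i) for all u, v with ε(u) = ε(v), Σ_w M(u,w)·M(w,v) = Σ_w M(v,w)·M(w,u) (the number of directed paths of length 2 from u to v equals the number from v to u); (ii) A and B commute: Σ_w A(u,w)·B(w,v) = Σ_w B(u,w)·A(w,v) for all u, v. -/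
open scoped BigOperators

/-- for a bipartite quiver without 2-cycles, with arrow-multiplicity matrix `M`,
the path-counting condition (i) (for vertices of the same color, the number of directed paths
of length 2 from `u` to `v` equals the number from `v` to `u`) is equivalent to the
commutativity (ii) of the associated matrices `A` and `B`. -/
theorem recurrent_iff_commuting
    {V : Type} [Fintype V] [DecidableEq V]
    (eps : V → ℤ) (heps : ∀ v, eps v = 0 ∨ eps v = 1)
    (M : V → V → ℕ)
    (hMbip : ∀ u v, eps u = eps v → M u v = 0)
    (hM2 : ∀ u v, M u v * M v u = 0)
    (A B : V → V → ℕ)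
    (hA : ∀ u v, A u v = if eps u = 0 ∧ eps v = 1 then M u v
      else if eps u = 1 ∧ eps v = 0 then M v u else 0)
    (hB : ∀ u v, B u v = if eps u = 1 ∧ eps v = 0 then M u v
      else if eps u = 0 ∧ eps v = 1 then M v u else 0) :
    (∀ u v, eps u = eps v → (∑ w, M u w * M w v) = ∑ w, M v w * M w u) ↔
    (∀ u v, (∑ w, A u w * B w v) = ∑ w, B u w * A w v) := by
  have hAB : ∀ u v, (∑ w, A u w * B w v) =
      if eps u = 0 ∧ eps v = 0 then ∑ w, M u w * M w v
      else if eps u = 1 ∧ eps v = 1 then ∑ w, M v w * M w u else 0 := by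
    intro u v
    rcases heps u with hu | hu <;> rcases heps v with hv | hv
    · simp only [hu, hv, and_self, if_true]
      refine Finset.sum_congr rfl fun w _ => ?_
      rcases heps w with hw | hw
      · simp [hA, hB, hu, hv, hw, hMbip u w (by rw [hu, hw])]
      · simp [hA, hB, hu, hv, hw]
    · rw [if_neg (by rw [hu, hv]; norm_num), if_neg (by rw [hu, hv]; norm_num)]
      refine Finset.sum_eq_zero fun w _ => ?_
      rcases heps w with hw | hw <;> simp [hA, hB, hu, hv, hw]
    · rw [if_neg (by rw [hu, hv]; norm_num), if_neg (by rw [hu, hv]; norm_num)]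
      refine Finset.sum_eq_zero fun w _ => ?_
      rcases heps w with hw | hw <;> simp [hA, hB, hu, hv, hw]
    · norm_num [hu, hv]
      refine Finset.sum_congr rfl fun w _ => ?_
      rcases heps w with hw | hw
      · simp [hA, hB, hu, hv, hw, mul_comm]
      · simp [hA, hB, hu, hv, hw, hMbip w u (by rw [hu, hw]), hMbip v w (by rw [hv, hw])]
  have hBA : ∀ u v, (∑ w, B u w * A w v) =
      if eps u = 0 ∧ eps v = 0 then ∑ w, M v w * M w u
      else if eps u = 1 ∧ eps v = 1 then ∑ w, M u w * M w v else 0 := by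
    intro u v
    rcases heps u with hu | hu <;> rcases heps v with hv | hv
    · simp only [hu, hv, and_self, if_true]
      refine Finset.sum_congr rfl fun w _ => ?_
      rcases heps w with hw | hw
      · simp [hA, hB, hu, hv, hw, hMbip w u (by rw [hu, hw]), hMbip v w (by rw [hv, hw])]
      · simp [hA, hB, hu, hv, hw, mul_comm]
    · rw [if_neg (by rw [hu, hv]; norm_num), if_neg (by rw [hu, hv]; norm_num)]
      refine Finset.sum_eq_zero fun w _ => ?_
      rcases heps w with hw | hw <;> simp [hA, hB, hu, hv, hw]
    · rw [if_neg (by rw [hu, hv]; norm_num), if_neg (by rw [hu, hv]; norm_num)]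
      refine Finset.sum_eq_zero fun w _ => ?_
      rcases heps w with hw | hw <;> simp [hA, hB, hu, hv, hw]
    · norm_num [hu, hv]
      refine Finset.sum_congr rfl fun w _ => ?_
      rcases heps w with hw | hw
      · simp [hA, hB, hu, hv, hw]
      · simp [hA, hB, hu, hv, hw, hMbip u w (by rw [hu, hw])]
  constructor
  · intro h u v
    rw [hAB, hBA]
    rcases heps u with hu | hu <;> rcases heps v with hv | hv <;>
      norm_num [hu, hv]
    · exact h u v (by rw [hu, hv])
    · exact h v u (by rw [hu, hv])
  · intro h u v huv
    have := h u v
    rw [hAB, hBA] at this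
    rcases heps u with hu | hu
    · have hv : eps v = 0 := by rw [← huv, hu]
      simpa [hu, hv] using this
    · have hv : eps v = 1 := by rw [← huv, hu]
      norm_num [hu, hv] at this
      exact this.symm
end

section
/- Let (Γ, Δ) be a pair of simple graphs on a common finite vertex set V with no common edges, admitting a common bipartition ε : V → {0,1} (every edge of Γ and every edge of Δ joins vertices with different values of ε), whose adjacency matrices commute, and such that every connected component of Γ and every connected component of Δ is an ADE Dynkin diagram. Then there exist maps c_Γ, c_Δ : V → {0,1} such that for every edge {u,v} of Γ one has c_Γ(u) ≠ c_Γ(v) and c_Δ(u) = c_Δ(v), and for every edge {u,v} of Δ one has c_Γ(u) = c_Γ(v) and c_Δ(u) ≠ c_Δ(v). -/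
open scoped BigOperators

/-- The Dynkin diagram `A_n`: vertices `0, …, n-1` with edges `{i, i+1}`. -/
def adeA (n : ℕ) : SimpleGraph (Fin n) :=
  SimpleGraph.fromRel (fun i j => (i : ℕ) + 1 = (j : ℕ))

/-- The Dynkin diagram `D_n` (`n ≥ 4`): a path on vertices `0, …, n-2`
together with the edge `{n-3, n-1}`. -/
def adeD (n : ℕ) : SimpleGraph (Fin n) :=
  SimpleGraph.fromRel (fun i j =>
    ((i : ℕ) + 1 = (j : ℕ) ∧ (j : ℕ) ≤ n - 2) ∨ ((i : ℕ) = n - 3 ∧ (j : ℕ) = n - 1))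

/-- The Dynkin diagram `E_n` (`n = 6, 7, 8`): a path on vertices `0, …, n-2`
together with the edge `{2, n-1}`. -/
def adeE (n : ℕ) : SimpleGraph (Fin n) :=
  SimpleGraph.fromRel (fun i j =>
    ((i : ℕ) + 1 = (j : ℕ) ∧ (j : ℕ) ≤ n - 2) ∨ ((i : ℕ) = 2 ∧ (j : ℕ) = n - 1))

/-- A graph is an ADE Dynkin diagram if it is isomorphic to some `A_n` (`n ≥ 1`),
`D_n` (`n ≥ 4`), or `E_n` (`n = 6, 7, 8`). -/
def IsADE {W : Type*} (G : SimpleGraph W) : Prop :=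
  (∃ n : ℕ, 1 ≤ n ∧ Nonempty (G ≃g adeA n)) ∨
  (∃ n : ℕ, 4 ≤ n ∧ Nonempty (G ≃g adeD n)) ∨
  (∃ n : ℕ, (n = 6 ∨ n = 7 ∨ n = 8) ∧ Nonempty (G ≃g adeE n))

/-!
Dynkin diagrams are trees, so `G` and `D` are forests. Commuting adjacency matrices mean that
a `G`-step followed by a `D`-step can be replaced by a `D`-step followed by a `G`-step, and
conversely; hence every walk in `G ⊔ D` can be rearranged into a `G`-walk followed by a `D`-walk
with the same numbers of steps of each kind.

The key fact is that no two vertices are joined both by an odd `G`-walk and by an odd `D`-walk.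
In a minimal counterexample both walks are paths, and one of them, say the `D`-path, has length
at least three (two paths of length one would be a common edge). Pushing the `G`-walk across the
last edge of the `D`-path yields a `D`-neighbour `a'` of the start and a `G`-walk of the same
length from `a'` to the penultimate vertex. Since `D` is a forest, either `a'` is the second
vertex of the path, which gives a counterexample with a `D`-path shorter by two, or the path
extends backwards through `a'` and the argument repeats, which cannot go on forever.

Consequently a closed walk in `G ⊔ D`, which is even by the common bipartition `ε`, uses an even
number of `D`-edges. So the parity `c_D` of the number of `D`-edges on a walk from a base point
is well defined, and `c_G = ε + c_D`.
-/

theorem ZMod.eq_add_one_of_ne {a b : ZMod 2} (h : a ≠ b) : b = a + 1 := by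
  revert a b
  decide

namespace SimpleGraph

variable {V : Type*} {G : SimpleGraph V}

theorem Walk.natCast_length_eq_sub {f : V → ZMod 2} (hf : ∀ u v, G.Adj u v → f u ≠ f v) :
    ∀ {u v : V} (p : G.Walk u v), (p.length : ZMod 2) = f v - f u
  | _, _, .nil => by simp
  | _, _, .cons h p => by
      rw [length_cons, Nat.cast_succ, natCast_length_eq_sub hf p, ZMod.eq_add_one_of_ne (hf _ _ h)]
      ring

theorem Walk.odd_length_iff_of_isBipartite (hG : G.IsBipartite) {u v : V} (p q : G.Walk u v) :
    Odd p.length ↔ Odd q.length := by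
  obtain ⟨c⟩ := hG
  -- `Fin 2` is `ZMod 2` by definition
  have hc : ∀ u v, G.Adj u v → (c u : ZMod 2) ≠ c v := fun u v h => c.valid h
  rw [← ZMod.natCast_eq_one_iff_odd, ← ZMod.natCast_eq_one_iff_odd,
    p.natCast_length_eq_sub hc, q.natCast_length_eq_sub hc]

theorem adjMatrix_mul_apply_ne_zero_iff {α : Type*} [NonAssocSemiring α] [CharZero α] [Fintype V]
    [DecidableRel G.Adj] {H : SimpleGraph V} [DecidableRel H.Adj] {a b : V} :
    (G.adjMatrix α * H.adjMatrix α) a b ≠ 0 ↔ Relation.Comp G.Adj H.Adj a b := by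
  simp [adjMatrix_apply, Finset.sum_boole, Relation.Comp, H.adj_comm b, and_comm]

theorem comp_adj_eq_of_adjMatrix_mul_comm {α : Type*} [NonAssocSemiring α] [CharZero α] [Fintype V]
    [DecidableRel G.Adj] {H : SimpleGraph V} [DecidableRel H.Adj]
    (h : G.adjMatrix α * H.adjMatrix α = H.adjMatrix α * G.adjMatrix α) :
    Relation.Comp G.Adj H.Adj = Relation.Comp H.Adj G.Adj := by
  ext a b
  rw [← adjMatrix_mul_apply_ne_zero_iff (α := α), h, adjMatrix_mul_apply_ne_zero_iff]

variable {X Y : SimpleGraph V}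

theorem Walk.exists_adj_walk_of_comp_le
    (hXY : Relation.Comp X.Adj Y.Adj ≤ Relation.Comp Y.Adj X.Adj) :
    ∀ {a b c : V} (p : X.Walk a b), Y.Adj b c →
      ∃ a', Y.Adj a a' ∧ ∃ p' : X.Walk a' c, p'.length = p.length
  | _, _, _, .nil, h => ⟨_, h, .nil, rfl⟩
  | _, _, _, .cons h p, hbc => by
      obtain ⟨m', hm', p', hp'⟩ := exists_adj_walk_of_comp_le hXY p hbc
      obtain ⟨a', ha', ham'⟩ := hXY _ _ ⟨_, h, hm'⟩
      exact ⟨a', ha', .cons ham' p', by simp [hp']⟩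

theorem IsAcyclic.exists_shorter_walk_of_comp_le [Fintype V] (hY : Y.IsAcyclic)
    (hXY : Relation.Comp X.Adj Y.Adj ≤ Relation.Comp Y.Adj X.Adj) {h : ℕ} (hh : 2 ≤ h) {a c : V}
    (R : Y.Walk a c) (hR : R.IsPath) (hle : h ≤ R.length) {b : V} (hb : R.getVert h = b)
    (p : X.Walk a b) :
    ∃ a' b' : V, ∃ (p' : X.Walk a' b') (q' : Y.Walk a' b'),
      p'.length = p.length ∧ q'.length = h - 2 := by
  have hadj : Y.Adj b (R.getVert (h - 1)) := by
    have := R.adj_getVert_succ (i := h - 1) (by omega)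
    rw [Nat.sub_add_cancel (by omega), hb] at this
    exact this.symm
  obtain ⟨a', ha', p', hp'⟩ := p.exists_adj_walk_of_comp_le hXY hadj
  by_cases hmem : a' ∈ R.support
  · have hend : R.tail.getVert (h - 2) = R.getVert (h - 1) := by
      rw [Walk.tail, Walk.drop_getVert]; congr 1; omega
    refine ⟨a', _, p', (R.tail.take (h - 2)).copy (hY.eq_snd_of_adj_start hR ha' hmem).symm hend,
      hp', ?_⟩
    rw [Walk.length_copy, Walk.take_length, Walk.tail, Walk.drop_length]
    omega
  · have hR' : (Walk.cons ha'.symm R).IsPath := hR.cons hmem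
    have hlt := hR'.length_lt
    have hget : (Walk.cons ha'.symm R).getVert h = R.getVert (h - 1) :=
      R.getVert_cons ha'.symm (by omega)
    obtain ⟨a'', b'', p'', q'', hp'', hq''⟩ := hY.exists_shorter_walk_of_comp_le hXY hh
      (.cons ha'.symm R) hR' (by simp; omega) hget p'
    exact ⟨a'', b'', p'', q'', by simp [hp'', hp'], hq''⟩
termination_by Fintype.card V - R.length
decreasing_by rw [Walk.length_cons] at hlt ⊢; omega

theorem IsAcyclic.false_of_odd_length_walks [Fintype V] (hX : X.IsAcyclic) (hY : Y.IsAcyclic)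
    (hdisj : Disjoint X Y) (hXY : Relation.Comp X.Adj Y.Adj = Relation.Comp Y.Adj X.Adj)
    {a b : V} (p : X.Walk a b) (q : Y.Walk a b) (hp : Odd p.length) (hq : Odd q.length) :
    False := by
  classical
  rcases p.length_bypass_le_length.lt_or_eq with hlt | hpeq
  · exact hX.false_of_odd_length_walks hY hdisj hXY p.bypass q
      ((p.bypass.odd_length_iff_of_isBipartite hX.isBipartite p).mpr hp) hq
  rcases q.length_bypass_le_length.lt_or_eq with hlt | hqeq
  · exact hX.false_of_odd_length_walks hY hdisj hXY p q.bypass hp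
      ((q.bypass.odd_length_iff_of_isBipartite hY.isBipartite q).mpr hq)
  have hpend : p.bypass.getVert p.length = b := by rw [← hpeq, Walk.getVert_length]
  have hqend : q.bypass.getVert q.length = b := by rw [← hqeq, Walk.getVert_length]
  obtain ⟨k, hk⟩ := hp
  obtain ⟨l, hl⟩ := hq
  by_cases hq1 : q.length = 1
  · by_cases hp1 : p.length = 1
    · exact disjoint_left.mp hdisj a b (p.adj_of_length_eq_one hp1) (q.adj_of_length_eq_one hq1)
    obtain ⟨a', b', q', p', hq', hp'⟩ := hX.exists_shorter_walk_of_comp_le hXY.ge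
      (h := p.length) (by omega) p.bypass p.bypass_isPath hpeq.ge hpend q
    exact hX.false_of_odd_length_walks hY hdisj hXY p' q' ⟨k - 1, by omega⟩ ⟨l, by omega⟩
  · obtain ⟨a', b', p', q', hp', hq'⟩ := hY.exists_shorter_walk_of_comp_le hXY.le
      (h := q.length) (by omega) q.bypass q.bypass_isPath hqeq.ge hqend p
    exact hX.false_of_odd_length_walks hY hdisj hXY p' q' ⟨k, by omega⟩ ⟨l - 1, by omega⟩
termination_by p.length + q.length
decreasing_by all_goals omega

theorem Walk.exists_walk_append_walk_of_comp_le
    (hXY : Relation.Comp X.Adj Y.Adj ≤ Relation.Comp Y.Adj X.Adj) :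
    ∀ {x y : V} (w : (X ⊔ Y).Walk x y), ∃ (z : V) (p : X.Walk x z) (q : Y.Walk z y),
      p.length + q.length = w.length ∧
        (q.length : ZMod 2) = (w.edges.map (Y.edgeSet.indicator (1 : Sym2 V → ZMod 2))).sum
  | _, _, .nil => ⟨_, .nil, .nil, rfl, by simp⟩
  | x, _, .cons (v := m) h w => by
      obtain ⟨z, p, q, hlen, hcount⟩ := exists_walk_append_walk_of_comp_le hXY w
      by_cases hY : Y.Adj x m
      · obtain ⟨z', hz', p', hp'⟩ := p.reverse.exists_adj_walk_of_comp_le hXY hY.symm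
        refine ⟨z', p'.reverse, .cons hz'.symm q, ?_, ?_⟩
        · simp only [length_reverse, length_cons, hp', ← hlen]; ring
        · simp [hcount, Set.indicator_of_mem (show s(x, m) ∈ Y.edgeSet from hY), add_comm]
      · refine ⟨z, .cons ((sup_adj ..).mp h |>.resolve_right hY) p, q, ?_, ?_⟩
        · simp only [length_cons, ← hlen]; ring
        · simp [hcount, Set.indicator_of_notMem (show s(x, m) ∉ Y.edgeSet from hY)]

theorem IsAcyclic.sum_indicator_edges_eq_zero [Fintype V] (hX : X.IsAcyclic) (hY : Y.IsAcyclic)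
    (hdisj : Disjoint X Y) (hXY : Relation.Comp X.Adj Y.Adj = Relation.Comp Y.Adj X.Adj)
    {f : V → ZMod 2} (hf : ∀ u v, (X ⊔ Y).Adj u v → f u ≠ f v) {x : V} (w : (X ⊔ Y).Walk x x) :
    (w.edges.map (Y.edgeSet.indicator (1 : Sym2 V → ZMod 2))).sum = 0 := by
  obtain ⟨z, p, q, hlen, hcount⟩ := w.exists_walk_append_walk_of_comp_le hXY.le
  have hw : Even w.length := by
    rw [← ZMod.natCast_eq_zero_iff_even, w.natCast_length_eq_sub hf, sub_self]
  refine hcount.symm.trans (ZMod.natCast_eq_zero_iff_even.mpr ?_)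
  rw [← Nat.not_odd_iff_even]
  intro hq
  have hp : Odd p.length := by grind
  exact hX.false_of_odd_length_walks hY hdisj hXY p q.reverse hp (by simpa using hq)

theorem exists_eq_add_of_sum_edges_eq_zero (χ : Sym2 V → ZMod 2)
    (h : ∀ (x : V) (w : G.Walk x x), (w.edges.map χ).sum = 0) :
    ∃ c : V → ZMod 2, ∀ u v, G.Adj u v → c v = c u + χ s(u, v) := by
  have hwalks : ∀ {x y : V} (w₁ w₂ : G.Walk x y),
      (w₁.edges.map χ).sum = (w₂.edges.map χ).sum := by
    intro x y w₁ w₂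
    have := h x (w₁.append w₂.reverse)
    rw [Walk.edges_append, Walk.edges_reverse, List.map_append, List.sum_append, List.map_reverse,
      List.sum_reverse] at this
    exact CharTwo.add_eq_zero.mp this
  let root (v : V) : V := (G.connectedComponentMk v).out
  have hroot (v : V) : G.Reachable (root v) v :=
    ConnectedComponent.exact (G.connectedComponentMk v).out_eq
  refine ⟨fun v => ((hroot v).some.edges.map χ).sum, fun u v huv => ?_⟩
  have hr : root u = root v := congrArg Quot.out (ConnectedComponent.sound huv.reachable)
  have := hwalks (((hroot u).some.concat huv).copy hr rfl) (hroot v).some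
  simpa [Walk.edges_concat] using this.symm

theorem IsAcyclic.exists_two_by_two_partition [Fintype V] (hX : X.IsAcyclic)
    (hY : Y.IsAcyclic) (hdisj : Disjoint X Y)
    (hXY : Relation.Comp X.Adj Y.Adj = Relation.Comp Y.Adj X.Adj)
    {ε : V → ZMod 2} (hε : ∀ u v, (X ⊔ Y).Adj u v → ε u ≠ ε v) :
    ∃ cX cY : V → ZMod 2,
      (∀ u v, X.Adj u v → cX u ≠ cX v ∧ cY u = cY v) ∧
      (∀ u v, Y.Adj u v → cX u = cX v ∧ cY u ≠ cY v) := by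
  obtain ⟨cY, hcY⟩ := exists_eq_add_of_sum_edges_eq_zero _ fun _ w =>
    hX.sum_indicator_edges_eq_zero hY hdisj hXY hε w
  refine ⟨ε + cY, cY, fun u v huv => ?_, fun u v huv => ?_⟩
  · have hc := hcY u v (Or.inl huv)
    rw [Set.indicator_of_notMem (show s(u, v) ∉ Y.edgeSet from disjoint_left.mp hdisj u v huv),
      add_zero] at hc
    refine ⟨fun h => hε u v (Or.inl huv) (add_right_cancel (b := cY u) ?_), hc.symm⟩
    simpa only [Pi.add_apply, hc] using h
  · have hc := hcY u v (Or.inr huv)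
    rw [Set.indicator_of_mem (show s(u, v) ∈ Y.edgeSet from huv), Pi.one_apply] at hc
    refine ⟨?_, by rw [hc]; exact (succ_ne_self (cY u)).symm⟩
    rw [Pi.add_apply, Pi.add_apply, hc, ZMod.eq_add_one_of_ne (hε u v (Or.inr huv)),
      add_add_add_comm, CharTwo.add_self_eq_zero, add_zero]

/-- The largest vertex of a cycle would have two smaller neighbours on it. -/
theorem isAcyclic_of_unique_smaller_neighbor [LinearOrder V]
    (h : ∀ u₁ u₂ w, G.Adj u₁ w → G.Adj u₂ w → u₁ < w → u₂ < w → u₁ = u₂) : G.IsAcyclic := by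
  intro v c hc
  obtain ⟨m, hm, hmax⟩ := c.support.toFinset.exists_max_image id ⟨v, by simp⟩
  rw [List.mem_toFinset] at hm
  have hc' := hc.rotate hm
  have hnil := hc'.not_nil
  have hlt : ∀ w ∈ (c.rotate m hm).support, G.Adj w m → w < m := fun w hw hadj =>
    lt_of_le_of_ne (hmax w (by simpa [Walk.mem_support_rotate_iff] using hw)) hadj.ne
  exact hc'.snd_ne_penultimate <| h _ _ _ (Walk.adj_snd hnil).symm (Walk.adj_penultimate hnil)
    (hlt _ (Walk.getVert_mem_support ..) (Walk.adj_snd hnil).symm)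
    (hlt _ (Walk.getVert_mem_support ..) (Walk.adj_penultimate hnil))

theorem isAcyclic_of_forall_isAcyclic_induce_supp
    (h : ∀ c : G.ConnectedComponent, (G.induce c.supp).IsAcyclic) : G.IsAcyclic := by
  classical
  intro v c hc
  have hsupp : ∀ x ∈ c.support, x ∈ (G.connectedComponentMk v).supp := fun x hx =>
    ConnectedComponent.sound (c.takeUntil x hx).reverse.reachable
  refine h _ (c.induce _ hsupp) ?_
  have hinj := (Embedding.induce (G := G) (G.connectedComponentMk v).supp).injective
  rwa [← Walk.isCycle_map_iff_of_injective (f := (Embedding.induce _).toHom) hinj,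
    Walk.map_induce]

end SimpleGraph

open SimpleGraph

theorem adeA_isAcyclic (n : ℕ) : (adeA n).IsAcyclic :=
  isAcyclic_of_unique_smaller_neighbor fun u₁ u₂ w h₁ h₂ hl₁ hl₂ => by
    simp only [adeA, fromRel_adj, Fin.lt_def] at *
    ext; omega

theorem adeD_isAcyclic (n : ℕ) : (adeD n).IsAcyclic :=
  isAcyclic_of_unique_smaller_neighbor fun u₁ u₂ w h₁ h₂ hl₁ hl₂ => by
    simp only [adeD, fromRel_adj, Fin.lt_def] at *
    ext; omega

theorem adeE_isAcyclic (n : ℕ) : (adeE n).IsAcyclic :=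
  isAcyclic_of_unique_smaller_neighbor fun u₁ u₂ w h₁ h₂ hl₁ hl₂ => by
    simp only [adeE, fromRel_adj, Fin.lt_def] at *
    ext; omega

theorem IsADE.isAcyclic {W : Type*} {A : SimpleGraph W} (h : IsADE A) : A.IsAcyclic := by
  rcases h with ⟨n, -, ⟨e⟩⟩ | ⟨n, -, ⟨e⟩⟩ | ⟨n, -, ⟨e⟩⟩
  exacts [e.isAcyclic_iff.mpr (adeA_isAcyclic n), e.isAcyclic_iff.mpr (adeD_isAcyclic n),
    e.isAcyclic_iff.mpr (adeE_isAcyclic n)]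

theorem admissibleADE_has_two_by_two_partition_general
    {V : Type} [Fintype V]
    (G D : SimpleGraph V) [DecidableRel G.Adj] [DecidableRel D.Adj]
    (hdisj : ∀ u v, ¬(G.Adj u v ∧ D.Adj u v))
    (eps : V → ℤ) (heps : ∀ v, eps v = 0 ∨ eps v = 1)
    (hGbip : ∀ u v, G.Adj u v → eps u ≠ eps v)
    (hDbip : ∀ u v, D.Adj u v → eps u ≠ eps v)
    (hcomm : G.adjMatrix ℕ * D.adjMatrix ℕ = D.adjMatrix ℕ * G.adjMatrix ℕ)
    (hGADE : ∀ c : G.ConnectedComponent, IsADE (G.induce c.supp))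
    (hDADE : ∀ c : D.ConnectedComponent, IsADE (D.induce c.supp)) :
    ∃ cG cD : V → Fin 2,
      (∀ u v, G.Adj u v → cG u ≠ cG v ∧ cD u = cD v) ∧
      (∀ u v, D.Adj u v → cG u = cG v ∧ cD u ≠ cD v) := by
  have hG := isAcyclic_of_forall_isAcyclic_induce_supp fun c => (hGADE c).isAcyclic
  have hD := isAcyclic_of_forall_isAcyclic_induce_supp fun c => (hDADE c).isAcyclic
  have hGD : Disjoint G D := disjoint_left.mpr fun u v huv hDuv => hdisj u v ⟨huv, hDuv⟩
  let ε (v : V) : ZMod 2 := eps v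
  have hε : ∀ u v, (G ⊔ D).Adj u v → ε u ≠ ε v := by
    intro u v huv
    have hne : eps u ≠ eps v := huv.elim (hGbip u v) (hDbip u v)
    rcases heps u with hu | hu <;> rcases heps v with hv | hv <;> simp_all [ε]
  -- `ZMod 2` is `Fin 2` by definition
  exact hG.exists_two_by_two_partition hD hGD (comp_adj_eq_of_adjMatrix_mul_comm hcomm) hε

/-- every admissible ADE bigraph admits a 2×2 vertex partition. -/
theorem admissibleADE_has_two_by_two_partition
    {V : Type} [Fintype V] [DecidableEq V]
    (G D : SimpleGraph V) [DecidableRel G.Adj] [DecidableRel D.Adj]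
    (hdisj : ∀ u v, ¬(G.Adj u v ∧ D.Adj u v))
    (eps : V → ℤ) (heps : ∀ v, eps v = 0 ∨ eps v = 1)
    (hGbip : ∀ u v, G.Adj u v → eps u ≠ eps v)
    (hDbip : ∀ u v, D.Adj u v → eps u ≠ eps v)
    (hcomm : G.adjMatrix ℕ * D.adjMatrix ℕ = D.adjMatrix ℕ * G.adjMatrix ℕ)
    (hGADE : ∀ c : G.ConnectedComponent, IsADE (G.induce c.supp))
    (hDADE : ∀ c : D.ConnectedComponent, IsADE (D.induce c.supp)) :
    ∃ cG cD : V → Fin 2,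
      (∀ u v, G.Adj u v → cG u ≠ cG v ∧ cD u = cD v) ∧
      (∀ u v, D.Adj u v → cG u = cG v ∧ cD u ≠ cD v) :=
  admissibleADE_has_two_by_two_partition_general G D hdisj eps heps hGbip hDbip hcomm hGADE hDADE
end

section
/- Let Q be a bipartite quiver on a finite vertex set V (not assumed recurrent). Then Q has a fixed point if and only if Q has a strictly subadditive labeling. -/
open scoped BigOperators

/-- A bipartite quiver on a finite vertex set `V`, encoded by a bipartition `eps`
and the two symmetric edge-multiplicity matrices `A` (arrows from `eps = 0` to `eps = 1`)
and `B` (arrows from `eps = 1` to `eps = 0`). -/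
def BipartiteData {V : Type} [Fintype V] (eps : V → ℤ) (A B : V → V → ℕ) : Prop :=
  (∀ v, eps v = 0 ∨ eps v = 1) ∧
  (∀ u v, A u v = A v u) ∧
  (∀ u v, B u v = B v u) ∧
  (∀ v, A v v = 0) ∧
  (∀ v, B v v = 0) ∧
  (∀ u v, eps u = eps v → A u v = 0 ∧ B u v = 0) ∧
  (∀ u v, A u v * B u v = 0)

/-- A bipartite quiver is recurrent iff the matrices `A` and `B` commute. -/
def RecurrentQuiver {V : Type} [Fintype V] (A B : V → V → ℕ) : Prop :=
  ∀ u v, (∑ w, A u w * B w v) = ∑ w, B u w * A w v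

/-- A fixed point of the `T`-system dynamics: `ρ : V → ℝ` with `ρ v > 1` and
`ρ v ^ 2 = ∏ u, ρ u ^ A v u + ∏ u, ρ u ^ B v u` for all `v`. -/
def IsFixedPoint {V : Type} [Fintype V] (A B : V → V → ℕ) (rho : V → ℝ) : Prop :=
  (∀ v, 1 < rho v) ∧
  (∀ v, rho v ^ 2 = (∏ u, rho u ^ A v u) + (∏ u, rho u ^ B v u))

/-- A strictly subadditive labeling: `ν : V → ℝ` positive with
`2ν v > Σ_u A v u * ν u` and `2ν v > Σ_u B v u * ν u` for all `v`. -/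
def IsStrictlySubadditiveLabeling {V : Type} [Fintype V] (A B : V → V → ℕ)
    (nu : V → ℝ) : Prop :=
  (∀ v, 0 < nu v) ∧
  (∀ v, (∑ u, (A v u : ℝ) * nu u) < 2 * nu v) ∧
  (∀ v, (∑ u, (B v u : ℝ) * nu u) < 2 * nu v)

/-!
If `ρ` is a fixed point, both monomials `∏ ρ ^ A v` and `∏ ρ ^ B v` are positive and add up to
`ρ v ^ 2`, so each is smaller than `ρ v ^ 2`; taking logarithms, `log ∘ ρ` is a strictly
subadditive labeling.

Conversely, if `ν` is a strictly subadditive labeling and `t` is large, then `M = exp (t • ν)`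
satisfies `∏ M ^ A v ≤ M v ^ 2 / 2` and `∏ M ^ B v ≤ M v ^ 2 / 2`. Hence the monotone map
`r ↦ √(∏ r ^ A v + ∏ r ^ B v)` sends the box `[1, M]` into itself, and Knaster–Tarski gives a
fixed point `ρ` in it. Since `ρ ≥ 1`, monotonicity gives `ρ ≥ √2 > 1`.
-/

open Finset Real Filter

theorem exists_isFixedPt_of_monotoneOn_Icc {α : Type*} [ConditionallyCompleteLattice α]
    {a b : α} (hab : a ≤ b) {f : α → α} (hf : MonotoneOn f (Set.Icc a b))
    (ha : a ≤ f a) (hb : f b ≤ b) : ∃ x ∈ Set.Icc a b, f x = x := by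
  have : Fact (a ≤ b) := ⟨hab⟩
  have hmaps : ∀ x ∈ Set.Icc a b, f x ∈ Set.Icc a b := fun x hx =>
    ⟨ha.trans (hf ⟨le_rfl, hab⟩ hx hx.1), (hf hx ⟨hab, le_rfl⟩ hx.2).trans hb⟩
  let g : Set.Icc a b →o Set.Icc a b :=
    ⟨fun x => ⟨f x, hmaps x x.2⟩, fun x y hxy => hf x.2 y.2 hxy⟩
  exact ⟨g.lfp, g.lfp.2, congrArg Subtype.val g.isFixedPt_lfp⟩

theorem exists_nonneg_forall_le_mul {ι : Type*} [Finite ι] {g : ι → ℝ} (hg : ∀ i, 0 < g i)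
    (c : ℝ) : ∃ t, 0 ≤ t ∧ ∀ i, c ≤ t * g i :=
  ((eventually_ge_atTop 0).and <| eventually_all.2 fun i =>
    (tendsto_id.atTop_mul_const (hg i)).eventually_ge_atTop c).exists

section Monomials

variable {V : Type*} [Fintype V]

theorem prod_pow_le_prod_pow {r s : V → ℝ} (hr : 0 ≤ r) (hrs : r ≤ s) (c : V → ℕ) :
    ∏ u, r u ^ c u ≤ ∏ u, s u ^ c u :=
  prod_le_prod (fun u _ => pow_nonneg (hr u) _) fun u _ => pow_le_pow_left₀ (hr u) (hrs u) _

theorem log_prod_pow {r : V → ℝ} (hr : ∀ u, 0 < r u) (c : V → ℕ) :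
    log (∏ u, r u ^ c u) = ∑ u, (c u : ℝ) * log (r u) := by
  rw [log_prod fun u _ => (pow_pos (hr u) _).ne']
  simp only [log_pow]

theorem prod_exp_pow (x : V → ℝ) (c : V → ℕ) :
    ∏ u, exp (x u) ^ c u = exp (∑ u, (c u : ℝ) * x u) := by
  rw [exp_sum]
  simp only [exp_nat_mul]

theorem sum_mul_log_lt_of_prod_pow_lt {r : V → ℝ} (hr : ∀ u, 0 < r u) {c : V → ℕ} {v : V}
    (h : ∏ u, r u ^ c u < r v ^ 2) : ∑ u, (c u : ℝ) * log (r u) < 2 * log (r v) := by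
  have := log_lt_log (prod_pos fun u _ => pow_pos (hr u) _) h
  rwa [log_prod_pow hr, log_pow, Nat.cast_ofNat] at this

theorem prod_exp_pow_le_of_log_two_le {ν : V → ℝ} {t : ℝ} {c : V → ℕ} {v : V}
    (h : log 2 ≤ t * (2 * ν v - ∑ u, (c u : ℝ) * ν u)) :
    ∏ u, exp (t * ν u) ^ c u ≤ exp (t * ν v) ^ 2 / 2 := by
  rw [prod_exp_pow, ← exp_nat_mul, ← exp_log (two_pos : (0 : ℝ) < 2), ← exp_sub]
  refine exp_le_exp.2 ?_
  simp only [mul_left_comm _ t, ← mul_sum]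
  push_cast
  linarith

end Monomials

section TSystem

variable {V : Type} [Fintype V] {A B : V → V → ℕ}

theorem IsFixedPoint.isStrictlySubadditiveLabeling_log {ρ : V → ℝ} (h : IsFixedPoint A B ρ) :
    IsStrictlySubadditiveLabeling A B fun v => log (ρ v) := by
  obtain ⟨h1, heq⟩ := h
  have hpos : ∀ u, 0 < ρ u := fun u => one_pos.trans (h1 u)
  have hprod : ∀ c : V → ℕ, 0 < ∏ u, ρ u ^ c u := fun c =>
    prod_pos fun u _ => pow_pos (hpos u) _
  refine ⟨fun v => log_pos (h1 v), fun v => ?_, fun v => ?_⟩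
  · exact sum_mul_log_lt_of_prod_pow_lt hpos (by linarith [heq v, hprod (B v)])
  · exact sum_mul_log_lt_of_prod_pow_lt hpos (by linarith [heq v, hprod (A v)])

theorem IsStrictlySubadditiveLabeling.exists_supersolution {ν : V → ℝ}
    (h : IsStrictlySubadditiveLabeling A B ν) :
    ∃ M : V → ℝ, 1 ≤ M ∧ ∀ v, (∏ u, M u ^ A v u) + ∏ u, M u ^ B v u ≤ M v ^ 2 := by
  obtain ⟨hpos, hA, hB⟩ := h
  obtain ⟨t, ht, hgap⟩ := exists_nonneg_forall_le_mul
    (fun v => lt_min (sub_pos.2 (hA v)) (sub_pos.2 (hB v))) (log 2)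
  refine ⟨fun v => exp (t * ν v), fun v => one_le_exp (mul_nonneg ht (hpos v).le), fun v => ?_⟩
  have hgapA := (hgap v).trans (mul_le_mul_of_nonneg_left (min_le_left _ _) ht)
  have hgapB := (hgap v).trans (mul_le_mul_of_nonneg_left (min_le_right _ _) ht)
  linarith [prod_exp_pow_le_of_log_two_le hgapA, prod_exp_pow_le_of_log_two_le hgapB]

variable (A B) in
noncomputable def tSystemMap (r : V → ℝ) (v : V) : ℝ :=
  √((∏ u, r u ^ A v u) + ∏ u, r u ^ B v u)

theorem tSystemMap_one : tSystemMap A B 1 = fun _ => √2 := by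
  ext v
  norm_num [tSystemMap]

theorem monotoneOn_tSystemMap : MonotoneOn (tSystemMap A B) (Set.Ici 0) :=
  fun _ hr _ _ hrs _ =>
    sqrt_le_sqrt (add_le_add (prod_pow_le_prod_pow hr hrs _) (prod_pow_le_prod_pow hr hrs _))

theorem exists_isFixedPoint_of_supersolution {M : V → ℝ} (hM1 : 1 ≤ M)
    (hM : ∀ v, (∏ u, M u ^ A v u) + ∏ u, M u ^ B v u ≤ M v ^ 2) :
    ∃ ρ, IsFixedPoint A B ρ := by
  have hmono : MonotoneOn (tSystemMap A B) (Set.Ici 1) :=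
    monotoneOn_tSystemMap.mono fun _ hr => zero_le_one.trans (Set.mem_Ici.1 hr)
  have hsub : 1 ≤ tSystemMap A B 1 := by
    rw [tSystemMap_one]
    exact fun _ => one_lt_sqrt_two.le
  have hsuper : tSystemMap A B M ≤ M := fun v =>
    (sqrt_le_sqrt (hM v)).trans_eq (sqrt_sq (zero_le_one.trans (hM1 v)))
  obtain ⟨ρ, hρ, hfix⟩ := exists_isFixedPt_of_monotoneOn_Icc hM1
    (hmono.mono Set.Icc_subset_Ici_self) hsub hsuper
  have hρ_ge : tSystemMap A B 1 ≤ ρ := hfix ▸ hmono (Set.mem_Ici.2 le_rfl) hρ.1 hρ.1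
  rw [tSystemMap_one] at hρ_ge
  refine ⟨ρ, fun v => one_lt_sqrt_two.trans_le (hρ_ge v), fun v => ?_⟩
  rw [← congrFun hfix v, tSystemMap, sq_sqrt]
  have hρ0 : ∀ u, 0 ≤ ρ u := fun u => zero_le_one.trans (hρ.1 u)
  exact add_nonneg (prod_nonneg fun u _ => pow_nonneg (hρ0 u) _)
    (prod_nonneg fun u _ => pow_nonneg (hρ0 u) _)

end TSystem

theorem fixedPoint_iff_strictlySubadditive_general
    {V : Type} [Fintype V]
    (A B : V → V → ℕ) :
    (∃ rho : V → ℝ, IsFixedPoint A B rho) ↔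
    (∃ nu : V → ℝ, IsStrictlySubadditiveLabeling A B nu) := by
  constructor
  · rintro ⟨rho, h⟩
    exact ⟨_, h.isStrictlySubadditiveLabeling_log⟩
  · rintro ⟨nu, h⟩
    obtain ⟨M, hM1, hM⟩ := h.exists_supersolution
    exact exists_isFixedPoint_of_supersolution hM1 hM

/-- a bipartite quiver has a fixed point iff it has a strictly subadditive
labeling. -/
theorem fixedPoint_iff_strictlySubadditive
    {V : Type} [Fintype V] [DecidableEq V]
    (eps : V → ℤ) (A B : V → V → ℕ)
    (hbip : BipartiteData eps A B) :
    (∃ rho : V → ℝ, IsFixedPoint A B rho) ↔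
    (∃ nu : V → ℝ, IsStrictlySubadditiveLabeling A B nu) :=
  fixedPoint_iff_strictlySubadditive_general A B
end

section
/- Let Q be a bipartite recurrent quiver on a finite vertex set V. Suppose T(t,v), defined for v ∈ V and t ∈ ℤ with t + ε(v) even, is a family of Laurent polynomials in the variables {x_v : v ∈ V} satisfying T(t+1,v)·T(t−1,v) = Π_u T(t,u)^{A(v,u)} + Π_w T(t,w)^{B(v,w)} (in the Laurent polynomial ring) whenever t + ε(v) is odd, with T(ε(v), v) = x_v. Let λ : V → ℝ and let f^λ be the tropical T-system with initial value λ. Then for all v ∈ V and t ∈ ℤ with t + ε(v) even, f^λ(t,v) = max{ Σ_u λ(u)·α(u) : α in the support of T(t,v) }, i.e. f^λ(t,v) is the maximum of the linear functional α ↦ Σ_u λ(u)·α(u) over the Newton polytope of T(t,v). -/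
open scoped BigOperators

/-- The tropical `T`-system associated with a bipartite quiver, with initial value `lam`. -/
def IsTropicalTSystem {V : Type} [Fintype V] (eps : V → ℤ) (A B : V → V → ℕ)
    (lam : V → ℝ) (f : ℤ → V → ℝ) : Prop :=
  (∀ v, f (eps v) v = lam v) ∧
  (∀ (t : ℤ) (v : V), Odd (t + eps v) →
    f (t + 1) v + f (t - 1) v =
      max (∑ u, (A v u : ℝ) * f t u) (∑ u, (B v u : ℝ) * f t u))

/-- The `T`-system associated with a bipartite quiver, as a family of Laurent polynomials
in `ℤ[ℤ^V]`, with initial conditions `T (eps v) v = x_v`. -/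
def IsLaurentTSystem {V : Type} [Fintype V] [DecidableEq V]
    (eps : V → ℤ) (A B : V → V → ℕ)
    (T : ℤ → V → AddMonoidAlgebra ℤ (V → ℤ)) : Prop :=
  (∀ v, T (eps v) v = AddMonoidAlgebra.single (Pi.single v (1 : ℤ)) 1) ∧
  (∀ (t : ℤ) (v : V), Odd (t + eps v) →
    T (t + 1) v * T (t - 1) v = (∏ u, T t u ^ A v u) + (∏ u, T t u ^ B v u))

/-!
Say that `p ∈ ℤ[ℤ^V]` has a positive top face of `λ`-weight `r` if every monomial of `p` has
weight `∑ u, λ u * α u ≤ r` and the coefficients of the monomials of weight exactly `r` have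
positive sum. This property is multiplicative, and it turns sums into maxima, because positive
top coefficient sums cannot cancel. It can also be divided out: if `x * y` and `y` have positive
top faces of weights `m` and `s`, then `x` has one of weight `m - s`, since in the torsion-free
group `ℤ^V` two top faces always produce a monomial of `x * y` that does not cancel. So the
property passes through each exchange relation `T(t+1,v) T(t-1,v) = ∏ + ∏` exactly as the
tropical recurrence does, and induction on `|t|`, starting from the monomials `x_v`, gives the
theorem.
-/

namespace AddMonoidAlgebra

open Finset

lemma coeff_mul_add_of_support_le {R Γ : Type*} [Semiring R] [AddCommMonoid Γ] [LinearOrder Γ]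
    [IsOrderedCancelAddMonoid Γ] {P Q : R[Γ]} {r s : Γ}
    (hP : ∀ x ∈ P.coeff.support, x ≤ r) (hQ : ∀ y ∈ Q.coeff.support, y ≤ s) :
    (P * Q).coeff (r + s) = P.coeff r * Q.coeff s :=
  coeff_mul_add_of_uniqueAdd fun _ _ hx hy ↦ (add_eq_add_iff_eq_and_eq (hP _ hx) (hQ _ hy)).mp

lemma exists_mem_support_of_coeff_mapDomain_ne_zero {R M N : Type*} [Semiring R] {f : M → N}
    {p : R[M]} {n : N} (h : (mapDomain f p).coeff n ≠ 0) : ∃ a ∈ p.coeff.support, f a = n := by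
  classical
  rw [coeff_mapDomain, ← Finsupp.mem_support_iff] at h
  simpa using Finsupp.mapDomain_support h

lemma support_mapDomain_le {R M : Type*} [Semiring R] {w : M → ℝ} {p : R[M]} {r : ℝ}
    (hp : ∀ a ∈ p.coeff.support, w a ≤ r) : ∀ x ∈ (mapDomain w p).coeff.support, x ≤ r := by
  intro x hx
  obtain ⟨a, ha, rfl⟩ :=
    exists_mem_support_of_coeff_mapDomain_ne_zero (Finsupp.mem_support_iff.mp hx)
  exact hp a ha

lemma coeff_mapDomain_mul_add {R M : Type*} [Semiring R] [AddMonoid M] {w : M →+ ℝ} {p q : R[M]}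
    {r s : ℝ} (hp : ∀ a ∈ p.coeff.support, w a ≤ r) (hq : ∀ b ∈ q.coeff.support, w b ≤ s) :
    (mapDomain w (p * q)).coeff (r + s) = (mapDomain w p).coeff r * (mapDomain w q).coeff s := by
  rw [← mapDomainRingHom_apply, map_mul, mapDomainRingHom_apply, mapDomainRingHom_apply]
  exact coeff_mul_add_of_support_le (support_mapDomain_le hp) (support_mapDomain_le hq)

/-- A uniquely attained sum of a top-weight monomial of `p` and one of `q` survives in `p * q`. -/
lemma exists_mem_support_mul_weight_eq_add {R M : Type*} [Semiring R] [NoZeroDivisors R]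
    [AddMonoid M] [UniqueSums M] {w : M →+ ℝ} {p q : R[M]} {r s : ℝ}
    (hp : ∀ a ∈ p.coeff.support, w a ≤ r) (hq : ∀ b ∈ q.coeff.support, w b ≤ s)
    (hr : ∃ a ∈ p.coeff.support, w a = r) (hs : ∃ b ∈ q.coeff.support, w b = s) :
    ∃ c ∈ (p * q).coeff.support, w c = r + s := by
  classical
  obtain ⟨a₀, ha₀, b₀, hb₀, hunique_top⟩ := UniqueSums.uniqueAdd_of_nonempty
    (A := p.coeff.support.filter (w · = r)) (B := q.coeff.support.filter (w · = s))
    (by simpa [Finset.Nonempty] using hr) (by simpa [Finset.Nonempty] using hs)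
  rw [mem_filter] at ha₀ hb₀
  have hunique : UniqueAdd p.coeff.support q.coeff.support a₀ b₀ := by
    intro a b ha hb hab
    have hw : w a + w b = r + s := by rw [← map_add, hab, map_add, ha₀.2, hb₀.2]
    obtain ⟨hwa, hwb⟩ := (add_eq_add_iff_eq_and_eq (hp a ha) (hq b hb)).mp hw
    exact hunique_top (mem_filter.mpr ⟨ha, hwa⟩) (mem_filter.mpr ⟨hb, hwb⟩) hab
  refine ⟨a₀ + b₀, ?_, by rw [map_add, ha₀.2, hb₀.2]⟩
  rw [Finsupp.mem_support_iff, coeff_mul_add_of_uniqueAdd hunique]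
  exact mul_ne_zero (Finsupp.mem_support_iff.mp ha₀.1) (Finsupp.mem_support_iff.mp hb₀.1)

/-- `(mapDomain w p).coeff r` is the sum of the coefficients of the monomials of `p` of
`w`-weight `r`, i.e. of the face of the Newton polytope of `p` on which `w` is maximal. -/
def HasPosTopFace {R M : Type*} [Semiring R] [LinearOrder R] [AddMonoid M] (w : M →+ ℝ) (r : ℝ)
    (p : R[M]) : Prop :=
  (∀ a ∈ p.coeff.support, w a ≤ r) ∧ 0 < (mapDomain w p).coeff r

lemma HasPosTopFace.isGreatest {R M : Type*} [Semiring R] [LinearOrder R] [AddMonoid M]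
    {w : M →+ ℝ} {p : R[M]} {r : ℝ} (h : HasPosTopFace w r p) :
    IsGreatest (w '' p.coeff.support) r :=
  ⟨exists_mem_support_of_coeff_mapDomain_ne_zero h.2.ne', by
    rintro _ ⟨a, ha, rfl⟩
    exact h.1 a ha⟩

namespace HasPosTopFace

variable {R M : Type*} [CommRing R] [LinearOrder R] [IsStrictOrderedRing R] [AddCommMonoid M]
  {w : M →+ ℝ} {p q : R[M]} {r s : ℝ}

lemma single (a : M) : HasPosTopFace w (w a) (single a (1 : R)) := by
  classical
  constructor
  · intro b hb
    simp_all [Finsupp.support_single]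
  · simp

lemma one : HasPosTopFace w 0 (1 : R[M]) := by
  simpa [one_def] using single (R := R) (w := w) 0

lemma mul (hp : HasPosTopFace w r p) (hq : HasPosTopFace w s q) :
    HasPosTopFace w (r + s) (p * q) := by
  classical
  refine ⟨fun c hc ↦ ?_, ?_⟩
  · obtain ⟨a, ha, b, hb, rfl⟩ := Finset.mem_add.mp (support_coeff_mul_subset p q hc)
    rw [map_add]
    exact add_le_add (hp.1 a ha) (hq.1 b hb)
  · rw [coeff_mapDomain_mul_add hp.1 hq.1]
    exact mul_pos hp.2 hq.2

lemma pow (hp : HasPosTopFace w r p) (n : ℕ) : HasPosTopFace w (n * r) (p ^ n) := by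
  induction n with
  | zero => simpa using one
  | succ n ih => simpa [pow_succ, add_mul] using ih.mul hp

lemma prod_pow {ι : Type*} (s : Finset ι) (n : ι → ℕ) (g : ι → R[M]) (r : ι → ℝ)
    (h : ∀ i ∈ s, n i ≠ 0 → HasPosTopFace w (r i) (g i)) :
    HasPosTopFace w (∑ i ∈ s, n i * r i) (∏ i ∈ s, g i ^ n i) := by
  classical
  induction s using Finset.induction with
  | empty => simpa using one
  | insert i s hi ih =>
    rw [sum_insert hi, prod_insert hi]
    refine .mul ?_ (ih fun j hj ↦ h j (mem_insert_of_mem hj))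
    by_cases hn : n i = 0
    · simpa [hn] using one
    · exact (h i (mem_insert_self i s) hn).pow _

lemma add (hp : HasPosTopFace w r p) (hq : HasPosTopFace w s q) :
    HasPosTopFace w (max r s) (p + q) := by
  classical
  have coeff_eq_zero_of_lt {x : R[M]} {rx t : ℝ} (hx : HasPosTopFace w rx x) (h : rx < t) :
      (mapDomain w x).coeff t = 0 :=
    Finsupp.notMem_support_iff.mp fun ht ↦ (support_mapDomain_le hx.1 t ht).not_gt h
  refine ⟨fun a ha ↦ ?_, ?_⟩
  · rcases mem_union.mp (Finsupp.support_add ha) with h | h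
    · exact (hp.1 a h).trans (le_max_left r s)
    · exact (hq.1 a h).trans (le_max_right r s)
  · rw [mapDomain_add, coeff_add, Finsupp.add_apply]
    rcases lt_trichotomy r s with h | rfl | h
    · rw [max_eq_right h.le, coeff_eq_zero_of_lt hp h, zero_add]
      exact hq.2
    · rw [max_self]
      exact add_pos hp.2 hq.2
    · rw [max_eq_left h.le, coeff_eq_zero_of_lt hq h, add_zero]
      exact hp.2

lemma of_mul [UniqueSums M] {m : ℝ} (hpq : HasPosTopFace w m (p * q))
    (hq : HasPosTopFace w s q) : HasPosTopFace w (m - s) p := by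
  classical
  have hp_ne : p.coeff.support.Nonempty := by
    obtain ⟨c, hc, -⟩ := hpq.isGreatest.1
    obtain ⟨a, ha, -⟩ := mem_add.mp (support_coeff_mul_subset p q hc)
    exact ⟨a, ha⟩
  obtain ⟨a, ha, hmax⟩ := p.coeff.support.exists_max_image w hp_ne
  obtain ⟨c, hc, hwc⟩ := exists_mem_support_mul_weight_eq_add hmax hq.1 ⟨a, ha, rfl⟩ hq.isGreatest.1
  have hbound : ∀ b ∈ p.coeff.support, w b ≤ m - s := fun b hb ↦ by
    linarith [hmax b hb, hpq.1 c hc]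
  refine ⟨hbound, pos_of_mul_pos_left ?_ hq.2.le⟩
  rw [← coeff_mapDomain_mul_add hbound hq.1, sub_add_cancel]
  exact hpq.2

/-- Tropicalization of an exchange relation `x * y = P + Q`. -/
lemma of_mul_eq_add [UniqueSums M] {x y P Q : R[M]} {rx ry rP rQ : ℝ} (h : x * y = P + Q)
    (hP : HasPosTopFace w rP P) (hQ : HasPosTopFace w rQ Q) (hy : HasPosTopFace w ry y)
    (hr : rx + ry = max rP rQ) : HasPosTopFace w rx x := by
  have hxy := hP.add hQ
  rw [← h, ← hr] at hxy
  simpa using hxy.of_mul hy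

end HasPosTopFace

end AddMonoidAlgebra

open AddMonoidAlgebra

def linearWeight {V : Type} [Fintype V] (lam : V → ℝ) : (V → ℤ) →+ ℝ where
  toFun a := ∑ u, lam u * a u
  map_zero' := by simp
  map_add' a b := by simp [mul_add, Finset.sum_add_distrib]

lemma linearWeight_single {V : Type} [Fintype V] [DecidableEq V] (lam : V → ℝ) (v : V) :
    linearWeight lam (Pi.single v 1) = lam v := by
  simp [linearWeight, Pi.single_apply]

section TSystem

variable {V : Type} [Fintype V] [DecidableEq V] {eps : V → ℤ} {A B : V → V → ℕ}
  {T : ℤ → V → AddMonoidAlgebra ℤ (V → ℤ)} {lam : V → ℝ} {f : ℤ → V → ℝ}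

lemma hasPosTopFace_exchange (hbip : BipartiteData eps A B) (hT : IsLaurentTSystem eps A B T)
    (hf : IsTropicalTSystem eps A B lam f) {t : ℤ} {v : V} (hodd : Odd (t + eps v))
    (hnbr : ∀ u, eps u ≠ eps v → HasPosTopFace (linearWeight lam) (f t u) (T t u))
    {s s' : ℤ} (hss' : s = t + 1 ∧ s' = t - 1 ∨ s = t - 1 ∧ s' = t + 1)
    (h : HasPosTopFace (linearWeight lam) (f s' v) (T s' v)) :
    HasPosTopFace (linearWeight lam) (f s v) (T s v) := by
  have hmonomial (n : V → ℕ) (hn : ∀ u, eps u = eps v → n u = 0) :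
      HasPosTopFace (linearWeight lam) (∑ u, n u * f t u) (∏ u, T t u ^ n u) :=
    .prod_pow _ _ _ _ fun u _ hu ↦ hnbr u fun heq ↦ hu (hn u heq)
  obtain ⟨-, -, -, -, -, hsame, -⟩ := hbip
  refine .of_mul_eq_add ?_ (hmonomial (A v) fun u hu ↦ (hsame v u hu.symm).1)
    (hmonomial (B v) fun u hu ↦ (hsame v u hu.symm).2) h ?_
  · rcases hss' with ⟨rfl, rfl⟩ | ⟨rfl, rfl⟩
    · exact hT.2 t v hodd
    · rw [mul_comm]
      exact hT.2 t v hodd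
  · rcases hss' with ⟨rfl, rfl⟩ | ⟨rfl, rfl⟩
    · exact hf.2 t v hodd
    · rw [add_comm]
      exact hf.2 t v hodd

theorem IsLaurentTSystem.hasPosTopFace (hbip : BipartiteData eps A B)
    (hT : IsLaurentTSystem eps A B T) (hf : IsTropicalTSystem eps A B lam f) {v : V} {t : ℤ}
    (ht : Even (t + eps v)) : HasPosTopFace (linearWeight lam) (f t v) (T t v) := by
  have heps := hbip.1
  suffices ∀ n : ℕ, ∀ v t, Even (t + eps v) → -(n : ℤ) ≤ t → t ≤ n + 1 →
      HasPosTopFace (linearWeight lam) (f t v) (T t v) from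
    this t.natAbs v t ht (by omega) (by omega)
  intro n
  induction n with
  | zero =>
    intro v t ht _ _
    obtain rfl : t = eps v := by
      rw [Int.even_iff] at ht
      rcases heps v with h | h <;> omega
    rw [hT.1, hf.1, ← linearWeight_single lam v]
    exact .single _
  | succ n ih =>
    intro v t ht hlo hhi
    by_cases hin : -(n : ℤ) ≤ t ∧ t ≤ n + 1
    · exact ih v t ht hin.1 hin.2
    obtain ⟨t₀, s', hss', ht₀lo, ht₀hi, hs'lo, hs'hi⟩ : ∃ t₀ s' : ℤ,
        (t = t₀ + 1 ∧ s' = t₀ - 1 ∨ t = t₀ - 1 ∧ s' = t₀ + 1) ∧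
        -(n : ℤ) ≤ t₀ ∧ t₀ ≤ n + 1 ∧ -(n : ℤ) ≤ s' ∧ s' ≤ n + 1 := by
      rcases (by omega : t = n + 2 ∨ t = -n - 1) with rfl | rfl
      · exact ⟨n + 1, n, by omega⟩
      · exact ⟨-n, -n + 1, by omega⟩
    rw [Int.even_iff] at ht
    refine hasPosTopFace_exchange hbip hT hf (t := t₀) ?_ (fun u hu ↦ ih u t₀ ?_ ht₀lo ht₀hi)
      hss' (ih v s' ?_ hs'lo hs'hi)
    · rw [Int.odd_iff]
      omega
    · rw [Int.even_iff]
      rcases heps u with h | h <;> rcases heps v with h' | h' <;> omega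
    · rw [Int.even_iff]
      omega

end TSystem

theorem tropical_is_support_max_general
    {V : Type} [Fintype V] [DecidableEq V]
    (eps : V → ℤ) (A B : V → V → ℕ)
    (hbip : BipartiteData eps A B)
    (T : ℤ → V → AddMonoidAlgebra ℤ (V → ℤ)) (hT : IsLaurentTSystem eps A B T)
    (lam : V → ℝ) (f : ℤ → V → ℝ) (hf : IsTropicalTSystem eps A B lam f) :
    ∀ (v : V) (t : ℤ), Even (t + eps v) →
      IsGreatest {r : ℝ | ∃ a ∈ (T t v).coeff.support, r = ∑ u, lam u * (a u : ℝ)} (f t v) := by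
  intro v t ht
  convert (hT.hasPosTopFace hbip hf ht).isGreatest using 1
  ext r
  simp [linearWeight, eq_comm]

/-- the tropical `T`-system with initial value `lam` computes the maximum of the
linear functional `α ↦ Σ_u lam u * α u` over the Newton polytope (equivalently, the support)
of the corresponding entry of the birational `T`-system. -/
theorem tropical_is_support_max
    {V : Type} [Fintype V] [DecidableEq V]
    (eps : V → ℤ) (A B : V → V → ℕ)
    (hbip : BipartiteData eps A B) (hrec : RecurrentQuiver A B)
    (T : ℤ → V → AddMonoidAlgebra ℤ (V → ℤ)) (hT : IsLaurentTSystem eps A B T)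
    (lam : V → ℝ) (f : ℤ → V → ℝ) (hf : IsTropicalTSystem eps A B lam f) :
    ∀ (v : V) (t : ℤ), Even (t + eps v) →
      IsGreatest {r : ℝ | ∃ a ∈ (T t v).coeff.support, r = ∑ u, lam u * (a u : ℝ)} (f t v) :=
  tropical_is_support_max_general eps A B hbip T hT lam f hf
end

section
/- Let Λ be an ADE Dynkin diagram with vertex set W and bipartition ε_Λ : W → {0,1}, and let B_Λ be the exchange matrix of the twist quiver Q(Λ × Λ): the vertex set is V = W × {1,2}, and for each edge {u,v} of Λ, B_Λ((u,i),(v,i)) = 1 if ε_Λ(u) = 0 and −1 if ε_Λ(u) = 1 (for i = 1,2), B_Λ((u,1),(v,2)) = B_Λ((u,2),(v,1)) = 1 if ε_Λ(u) = 1 and −1 if ε_Λ(u) = 0, with B_Λ = 0 on all other pairs of vertices (B_Λ is skew-symmetric). For w ∈ W let σ_w denote the operation of simultaneously permuting rows and columns by the transposition of (w,1) and (w,2). Then for every w ∈ W: σ_w( μ_{(w,1)}( μ_{(w,2)}( B_Λ ) ) ) = B_Λ. -/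
open scoped BigOperators

/-- Matrix mutation of a skew-symmetric exchange matrix at a vertex `k`. -/
def mutateEx {V : Type} [DecidableEq V] (B : V → V → ℤ) (k : V) : V → V → ℤ :=
  fun x y => if x = k ∨ y = k then -B x y
    else B x y + Int.sign (B x k) * max (B x k * B k y) 0

/-- The exchange matrix of the twist quiver `Q(Λ × Λ)` on the vertex set `W × Fin 2`
(the copy `(w, 1)` of the text corresponds to the index `0`, and `(w, 2)` to `1`). -/
def twistExchange {W : Type} (L : SimpleGraph W) [DecidableRel L.Adj] (eps : W → ℤ) :
    W × Fin 2 → W × Fin 2 → ℤ :=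
  fun p q =>
    if L.Adj p.1 q.1 then
      (if p.2 = q.2 then (if eps p.1 = 0 then 1 else -1)
       else (if eps p.1 = 1 then 1 else -1))
    else 0

/-- The map on `W × Fin 2` swapping the two copies `(w, 0)` and `(w, 1)` of `w`. -/
def swapAt {W : Type} [DecidableEq W] (w : W) (p : W × Fin 2) : W × Fin 2 :=
  if p.1 = w then (p.1, p.2 + 1) else p

/-- The operation `σ_w` on exchange matrices: simultaneously permute rows and columns by the
transposition of the two copies of `w`. -/
def sigmaSwap {W : Type} [DecidableEq W] (w : W)
    (M : W × Fin 2 → W × Fin 2 → ℤ) : W × Fin 2 → W × Fin 2 → ℤ :=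
  fun x y => M (swapAt w x) (swapAt w y)

/-! Writing `τ = !![1, -1; -1, 1]`, the twist exchange matrix is the Kronecker product `a ⊗ τ` of
the signed adjacency matrix `a` of `Λ` with `τ`. The two mutations at `(w, 0)` and `(w, 1)` do not
interact (`B` vanishes between them), so rows and columns over `w` are simply negated, which `σ_w`
undoes since `τ (i + 1) j = -τ i j`. On any other entry `(u, i), (v, j)` the mutation at `(w, c)`
adds `sign (a u w) * τ i c * max (a u w * a w v * τ i j) 0`, as `τ i c * τ c j = τ i j`; these two
corrections cancel because `τ i 0 = -τ i 1`. -/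

open scoped Kronecker

section Mutation

variable {V : Type} [DecidableEq V] {B : V → V → ℤ} {k k' x y : V}

theorem mutateEx_apply_left_self (y : V) : mutateEx B k k y = -B k y := by
  simp [mutateEx]

theorem mutateEx_apply_right_self (x : V) : mutateEx B k x k = -B x k := by
  simp [mutateEx]

theorem mutateEx_apply_of_ne (hx : x ≠ k) (hy : y ≠ k) :
    mutateEx B k x y = B x y + Int.sign (B x k) * max (B x k * B k y) 0 := by
  simp [mutateEx, hx, hy]

theorem mutateEx_apply_of_left_eq_zero (hx : x ≠ k) (h : B x k = 0) :
    mutateEx B k x y = B x y := by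
  by_cases hy : y = k
  · subst hy; simp [mutateEx_apply_right_self, h]
  · simp [mutateEx_apply_of_ne hx hy, h]

theorem mutateEx_apply_of_right_eq_zero (hy : y ≠ k) (h : B k y = 0) :
    mutateEx B k x y = B x y := by
  by_cases hx : x = k
  · subst hx; simp [mutateEx_apply_left_self, h]
  · simp [mutateEx_apply_of_ne hx hy, h]

variable (hkk' : k ≠ k') (h₁ : B k k' = 0) (h₂ : B k' k = 0)
include hkk' h₁ h₂

theorem mutateEx_mutateEx_apply_of_left_mem (hx : x = k ∨ x = k') :
    mutateEx (mutateEx B k') k x y = -B x y := by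
  rcases hx with rfl | rfl
  · rw [mutateEx_apply_left_self, mutateEx_apply_of_left_eq_zero hkk' h₁]
  · rw [mutateEx_apply_of_left_eq_zero hkk'.symm (by rw [mutateEx_apply_left_self, h₂, neg_zero]),
      mutateEx_apply_left_self]

theorem mutateEx_mutateEx_apply_of_right_mem (hy : y = k ∨ y = k') :
    mutateEx (mutateEx B k') k x y = -B x y := by
  rcases hy with rfl | rfl
  · rw [mutateEx_apply_right_self, mutateEx_apply_of_right_eq_zero hkk' h₂]
  · rw [mutateEx_apply_of_right_eq_zero hkk'.symm (by rw [mutateEx_apply_right_self, h₁, neg_zero]),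
      mutateEx_apply_right_self]

theorem mutateEx_mutateEx_apply_of_ne (hx : x ≠ k) (hx' : x ≠ k') (hy : y ≠ k) (hy' : y ≠ k') :
    mutateEx (mutateEx B k') k x y =
      B x y + Int.sign (B x k') * max (B x k' * B k' y) 0
        + Int.sign (B x k) * max (B x k * B k y) 0 := by
  rw [mutateEx_apply_of_ne hx hy, mutateEx_apply_of_ne hx' hy',
    mutateEx_apply_of_right_eq_zero hkk' h₂, mutateEx_apply_of_left_eq_zero hkk' h₁]

end Mutation

def twistSign : Matrix (Fin 2) (Fin 2) ℤ := !![1, -1; -1, 1]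

theorem twistSign_add_one_left (i j : Fin 2) : twistSign (i + 1) j = -twistSign i j := by
  fin_cases i <;> fin_cases j <;> rfl

theorem twistSign_add_one_right (i j : Fin 2) : twistSign i (j + 1) = -twistSign i j := by
  fin_cases i <;> fin_cases j <;> rfl

theorem sum_mutation_corrections_twistSign (r s : ℤ) (i j : Fin 2) :
    Int.sign (r * twistSign i 1) * max (r * twistSign i 1 * (s * twistSign 1 j)) 0
      + Int.sign (r * twistSign i 0) * max (r * twistSign i 0 * (s * twistSign 0 j)) 0 = 0 := by
  fin_cases i <;> fin_cases j <;> simp [twistSign, Int.sign_neg]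

theorem sigmaSwap_mutateEx_mutateEx_kronecker_twistSign {W : Type} [DecidableEq W]
    (a : Matrix W W ℤ) (w : W) (ha : a w w = 0) :
    sigmaSwap w (mutateEx (mutateEx (a ⊗ₖ twistSign) (w, 1)) (w, 0)) = a ⊗ₖ twistSign := by
  have hne : ((w, 0) : W × Fin 2) ≠ (w, 1) := by simp
  have hzero : ∀ i j : Fin 2, (a ⊗ₖ twistSign) (w, i) (w, j) = 0 := by simp [ha]
  have hrow := fun {x y} => mutateEx_mutateEx_apply_of_left_mem (x := x) (y := y) hne
    (hzero 0 1) (hzero 1 0)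
  have hcol := fun {x y} => mutateEx_mutateEx_apply_of_right_mem (x := x) (y := y) hne
    (hzero 0 1) (hzero 1 0)
  funext ⟨u, i⟩ ⟨v, j⟩
  have hover : ∀ c : Fin 2, (w, c + 1) = ((w, 0) : W × Fin 2) ∨ (w, c + 1) = (w, 1) := by
    intro c; fin_cases c <;> simp
  by_cases hu : u = w
  · subst hu
    by_cases hv : v = u
    · subst hv; simp [sigmaSwap, swapAt, hrow (hover i), ha]
    · simp only [sigmaSwap, swapAt, if_pos, hv, if_false, hrow (hover i),
        Matrix.kronecker_apply, twistSign_add_one_left, mul_neg, neg_neg]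
  by_cases hv : v = w
  · subst hv
    simp only [sigmaSwap, swapAt, hu, if_true, if_false, hcol (hover j),
      Matrix.kronecker_apply, twistSign_add_one_right, mul_neg, neg_neg]
  · have hx : ∀ c : Fin 2, ((u, i) : W × Fin 2) ≠ (w, c) := fun c h => hu (congrArg Prod.fst h)
    have hy : ∀ c : Fin 2, ((v, j) : W × Fin 2) ≠ (w, c) := fun c h => hv (congrArg Prod.fst h)
    simp only [sigmaSwap, swapAt, hu, hv, if_false]
    rw [mutateEx_mutateEx_apply_of_ne hne (hzero 0 1) (hzero 1 0) (hx 0) (hx 1) (hy 0) (hy 1)]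
    simp only [Matrix.kronecker_apply]
    rw [add_assoc, sum_mutation_corrections_twistSign, add_zero]

def signedAdjacency {W : Type} (L : SimpleGraph W) [DecidableRel L.Adj] (eps : W → ℤ) :
    Matrix W W ℤ :=
  fun u v => if L.Adj u v then (if eps u = 0 then 1 else -1) else 0

theorem twistExchange_eq_kronecker {W : Type} (L : SimpleGraph W) [DecidableRel L.Adj]
    (eps : W → ℤ) (heps : ∀ w, eps w = 0 ∨ eps w = 1) :
    twistExchange L eps = signedAdjacency L eps ⊗ₖ twistSign := by
  funext ⟨u, i⟩ ⟨v, j⟩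
  simp only [twistExchange, signedAdjacency, Matrix.kronecker_apply]
  split_ifs <;> rcases heps u with h | h <;> fin_cases i <;> fin_cases j <;>
    simp_all [twistSign]

theorem twist_exchange_invariant_general
    {W : Type} [DecidableEq W]
    (L : SimpleGraph W) [DecidableRel L.Adj]
    (eps : W → ℤ) (heps : ∀ w, eps w = 0 ∨ eps w = 1)
    (w : W) :
    sigmaSwap w (mutateEx (mutateEx (twistExchange L eps) (w, 1)) (w, 0)) =
      twistExchange L eps := by
  rw [twistExchange_eq_kronecker L eps heps]
  exact sigmaSwap_mutateEx_mutateEx_kronecker_twistSign _ w (by simp [signedAdjacency])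

/-- for the twist quiver of an ADE Dynkin diagram `Λ`,
`σ_w(μ_{(w,1)}(μ_{(w,2)}(B_Λ))) = B_Λ` for every vertex `w` of `Λ`. -/
theorem twist_exchange_invariant
    {W : Type} [Fintype W] [DecidableEq W]
    (L : SimpleGraph W) [DecidableRel L.Adj] (hADE : IsADE L)
    (eps : W → ℤ) (heps : ∀ w, eps w = 0 ∨ eps w = 1)
    (hbip : ∀ u v, L.Adj u v → eps u ≠ eps v)
    (w : W) :
    sigmaSwap w (mutateEx (mutateEx (twistExchange L eps) (w, 1)) (w, 0)) =
      twistExchange L eps :=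
  twist_exchange_invariant_general L eps heps w
end

section
/- Let Λ be an ADE Dynkin diagram with vertex set W and bipartition ε_Λ, and let B_Λ be the exchange matrix of the twist quiver Q(Λ × Λ) on V = W × {1,2} (as defined in the context). A labeled quiver is a pair (B, x) with B a skew-symmetric integer matrix on V and x : V → ℝ with x(v) > 0 for all v; define μ̃_k(B, x) = (μ_k(B), x') where x'(j) = x(j) for j ≠ k and x'(k)·x(k) = Π_{j : B(j,k) > 0} x(j)^{B(j,k)} + Π_{j : B(k,j) > 0} x(j)^{B(k,j)}. For w ∈ W let s_w be the operation swapping the vertices (w,1) and (w,2) (permuting rows and columns of B and the values of x accordingly), and set μ̄_w = s_w ∘ μ̃_{(w,1)} ∘ μ̃_{(w,2)}. Then for every x : V → ℝ with x > 0: if u, w ∈ W are adjacent in Λ, then (μ̄_u ∘ μ̄_w)³ (B_Λ, x) = (B_Λ, x); and if u, w ∈ W are distinct and non-adjacent in Λ, then (μ̄_u ∘ μ̄_w)² (B_Λ, x) = (B_Λ, x). That is, the operations μ̄_w satisfy the relations of the Coxeter group defined by Λ. -/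
set_option linter.unusedSectionVars false
set_option maxHeartbeats 1000000


open scoped BigOperators

/-- Labeled-quiver mutation `μ̃_k`: mutate the exchange matrix at `k` and exchange the label
at `k` according to `x' k * x k = ∏_{B j k > 0} x j ^ (B j k) + ∏_{B k j > 0} x j ^ (B k j)`. -/
noncomputable def lmutate {V : Type} [Fintype V] [DecidableEq V]
    (P : (V → V → ℤ) × (V → ℝ)) (k : V) : (V → V → ℤ) × (V → ℝ) :=
  (mutateEx P.1 k,
   fun j => if j = k then
      ((∏ i, P.2 i ^ (P.1 i k).toNat) + (∏ i, P.2 i ^ (P.1 k i).toNat)) / P.2 k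
    else P.2 j)

/-- The operation `s_w` on labeled quivers on `W × Fin 2`: swap the two copies of `w`. -/
def sPair {W : Type} [DecidableEq W]
    (w : W) (P : ((W × Fin 2) → (W × Fin 2) → ℤ) × ((W × Fin 2) → ℝ)) :
    ((W × Fin 2) → (W × Fin 2) → ℤ) × ((W × Fin 2) → ℝ) :=
  (fun x y => P.1 (swapAt w x) (swapAt w y), fun x => P.2 (swapAt w x))

/-- The operation `μ̄_w = s_w ∘ μ̃_{(w,1)} ∘ μ̃_{(w,2)}` (the copy `(w,1)` of the text is the
index `0` and `(w,2)` is the index `1`). -/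
noncomputable def mubar {W : Type} [Fintype W] [DecidableEq W]
    (w : W) (P : ((W × Fin 2) → (W × Fin 2) → ℤ) × ((W × Fin 2) → ℝ)) :
    ((W × Fin 2) → (W × Fin 2) → ℤ) × ((W × Fin 2) → ℝ) :=
  sPair w (lmutate (lmutate P (w, 1)) (w, 0))


/-! ### Auxiliary development -/

section TwistAux

variable {W : Type} [Fintype W] [DecidableEq W]
variable (L : SimpleGraph W) [DecidableRel L.Adj]

/-- Product of the labels of the neighbors of `u`, in copy `c`. -/
noncomputable def PP (c : Fin 2) (u : W) (x : W × Fin 2 → ℝ) : ℝ :=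
  ∏ v : W, if L.Adj v u then x (v, c) else 1

/-- The effect of `μ̄_u` on the labels of the twist quiver. -/
noncomputable def Tstep (u : W) (x : W × Fin 2 → ℝ) : W × Fin 2 → ℝ :=
  fun p => if p.1 = u then (PP L 0 u x + PP L 1 u x) / x (u, p.2 + 1) else x p

variable {L}

lemma PP_pos {x : W × Fin 2 → ℝ} (hx : ∀ p, 0 < x p) (c : Fin 2) (u : W) :
    0 < PP L c u x :=
  Finset.prod_pos fun v _ => by by_cases h : L.Adj v u <;> simp [h, hx _]

lemma PP_congr {x y : W × Fin 2 → ℝ} (c : Fin 2) (u : W)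
    (h : ∀ v, L.Adj v u → x (v, c) = y (v, c)) : PP L c u x = PP L c u y :=
  Finset.prod_congr rfl fun v _ => by by_cases hv : L.Adj v u <;> simp [hv, h v]

lemma Tstep_ne {u : W} {p : W × Fin 2} (x : W × Fin 2 → ℝ) (h : p.1 ≠ u) :
    Tstep L u x p = x p := if_neg h

lemma Tstep_at (u : W) (x : W × Fin 2 → ℝ) (c : Fin 2) :
    Tstep L u x (u, c) = (PP L 0 u x + PP L 1 u x) / x (u, c + 1) := if_pos rfl

lemma Tstep_pos {x : W × Fin 2 → ℝ} (hx : ∀ p, 0 < x p) (u : W) :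
    ∀ p, 0 < Tstep L u x p := by
  intro p
  by_cases h : p.1 = u
  · obtain ⟨v, c⟩ := p
    dsimp only at h
    subst h
    rw [Tstep_at]
    exact div_pos (add_pos (PP_pos hx 0 _) (PP_pos hx 1 _)) (hx _)
  · rw [Tstep_ne x h]; exact hx p

lemma PP_Tstep_self (x : W × Fin 2 → ℝ) (c : Fin 2) (w : W) :
    PP L c w (Tstep L w x) = PP L c w x :=
  PP_congr c w fun v hv => Tstep_ne x hv.ne

lemma PP_Tstep_nonadj (x : W × Fin 2 → ℝ) (c : Fin 2) {u w : W} (h : ¬L.Adj w u) :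
    PP L c u (Tstep L w x) = PP L c u x :=
  PP_congr c u fun v hv => Tstep_ne x (fun hvw : v = w => h (hvw ▸ hv))

lemma Tstep_invol {x : W × Fin 2 → ℝ} (hx : ∀ p, 0 < x p) (w : W) :
    Tstep L w (Tstep L w x) = x := by
  funext p
  by_cases h : p.1 = w
  · obtain ⟨v, c⟩ := p
    dsimp only at h
    subst h
    rw [Tstep_at, PP_Tstep_self, PP_Tstep_self, Tstep_at]
    have hc : c + 1 + 1 = c := by fin_cases c <;> decide
    rw [hc]
    have hS : (0:ℝ) < PP L 0 v x + PP L 1 v x := add_pos (PP_pos hx 0 v) (PP_pos hx 1 v)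
    rw [div_div_eq_mul_div, mul_comm, mul_div_assoc, div_self hS.ne', mul_one]
  · rw [Tstep_ne _ h, Tstep_ne x h]

lemma Tstep_comm {u w : W} (x : W × Fin 2 → ℝ) (hne : u ≠ w) (h : ¬L.Adj u w) :
    Tstep L u (Tstep L w x) = Tstep L w (Tstep L u x) := by
  have h' : ¬L.Adj w u := fun hh => h hh.symm
  funext p; obtain ⟨v, c⟩ := p
  by_cases hvu : v = u
  · rcases hvu with rfl
    rw [Tstep_at, PP_Tstep_nonadj x 0 h', PP_Tstep_nonadj x 1 h',
      Tstep_ne x (show ((v, c+1) : W × Fin 2).1 ≠ w from hne),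
      Tstep_ne _ (show ((v, c) : W × Fin 2).1 ≠ w from hne), Tstep_at]
  · by_cases hvw : v = w
    · rcases hvw with rfl
      rw [Tstep_ne _ (show ((v, c) : W × Fin 2).1 ≠ u from hvu), Tstep_at,
        Tstep_at, PP_Tstep_nonadj x 0 h, PP_Tstep_nonadj x 1 h,
        Tstep_ne x (show ((v, c+1) : W × Fin 2).1 ≠ u from hvu)]
    · rw [Tstep_ne _ (show ((v,c) : W × Fin 2).1 ≠ u from hvu),
        Tstep_ne _ (show ((v,c) : W × Fin 2).1 ≠ w from hvw),
        Tstep_ne _ (show ((v,c) : W × Fin 2).1 ≠ w from hvw),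
        Tstep_ne _ (show ((v,c) : W × Fin 2).1 ≠ u from hvu)]

lemma PP_Tstep_adj {u w : W} (x : W × Fin 2 → ℝ) (h : L.Adj w u) (c : Fin 2) :
    PP L c u (Tstep L w x) * x (w, c) = PP L c u x * Tstep L w x (w, c) := by
  unfold PP
  rw [← Finset.mul_prod_erase Finset.univ _ (Finset.mem_univ w),
      ← Finset.mul_prod_erase Finset.univ
        (fun v => if L.Adj v u then x (v, c) else 1) (Finset.mem_univ w)]
  have hrest : (∏ v ∈ Finset.univ.erase w, if L.Adj v u then Tstep L w x (v, c) else 1)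
      = ∏ v ∈ Finset.univ.erase w, if L.Adj v u then x (v, c) else 1 := by
    refine Finset.prod_congr rfl fun v hv => ?_
    have hvw : v ≠ w := Finset.ne_of_mem_erase hv
    by_cases hadj : L.Adj v u <;>
      simp [hadj, Tstep_ne x (show ((v,c) : W × Fin 2).1 ≠ w from hvw)]
  rw [hrest, if_pos h, if_pos h]
  ring

variable (eps : W → ℤ)

lemma twist_same (a : W) (i j : Fin 2) : twistExchange L eps (a, i) (a, j) = 0 := by
  simp [twistExchange]

variable {eps}

lemma prod_pow_eq_PP (x : W × Fin 2 → ℝ) (w : W) (c : Fin 2) (E : W × Fin 2 → ℤ)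
    (hE : ∀ i, (E i).toNat = if L.Adj i.1 w ∧ i.2 = c then 1 else 0) :
    (∏ i : W × Fin 2, x i ^ (E i).toNat) = PP L c w x := by
  rw [Fintype.prod_prod_type]
  refine Finset.prod_congr rfl fun v _ => ?_
  rw [Fin.prod_univ_two]
  simp only [hE]
  by_cases hv : L.Adj v w
  · fin_cases c <;> simp [hv]
  · simp [hv]

lemma col_toNat (heps : ∀ w, eps w = 0 ∨ eps w = 1)
    (hbip : ∀ u v, L.Adj u v → eps u ≠ eps v) (w : W) (t : Fin 2) (i : W × Fin 2) :
    (twistExchange L eps i (w, t)).toNat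
      = if L.Adj i.1 w ∧ i.2 = (if eps w = 0 then t + 1 else t) then 1 else 0 := by
  obtain ⟨v, j⟩ := i
  by_cases hv : L.Adj v w
  · have hne := hbip v w hv
    rcases heps v with h1 | h1 <;> rcases heps w with h2 | h2 <;>
      [skip; skip; skip; skip] <;>
      first
        | (exact absurd (h1.trans h2.symm) hne)
        | (fin_cases j <;> fin_cases t <;>
            simp [twistExchange, hv, h1, h2])
  · simp [twistExchange, hv]

lemma row_toNat (heps : ∀ w, eps w = 0 ∨ eps w = 1) (w : W) (t : Fin 2) (i : W × Fin 2) :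
    (twistExchange L eps (w, t) i).toNat
      = if L.Adj i.1 w ∧ i.2 = (if eps w = 0 then t else t + 1) then 1 else 0 := by
  obtain ⟨v, j⟩ := i
  by_cases hv : L.Adj v w
  · have hv' : L.Adj w v := hv.symm
    rcases heps w with h2 | h2 <;>
      fin_cases j <;> fin_cases t <;>
        simp [twistExchange, hv, hv', h2]
  · have hv' : ¬ L.Adj w v := fun hh => hv hh.symm
    simp [twistExchange, hv, hv']

lemma matrix_invariant (heps : ∀ w, eps w = 0 ∨ eps w = 1)
    (hbip : ∀ u v, L.Adj u v → eps u ≠ eps v) (w : W) :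
    (fun p q => mutateEx (mutateEx (twistExchange L eps) (w,1)) (w,0)
        (swapAt w p) (swapAt w q))
      = twistExchange L eps := by
  have hww : ¬ L.Adj w w := L.irrefl
  funext p q
  obtain ⟨a, i⟩ := p
  obtain ⟨b, j⟩ := q
  by_cases ha : a = w <;> by_cases hb : b = w
  · subst ha; subst hb
    fin_cases i <;> fin_cases j <;>
      simp [mutateEx, swapAt, twistExchange, hww]
  · subst ha
    by_cases hadj : L.Adj a b
    · rcases heps a with h2 | h2 <;> fin_cases i <;> fin_cases j <;>
        simp [mutateEx, swapAt, twistExchange, hww, hadj, hb, h2, Prod.ext_iff]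
    · fin_cases i <;> fin_cases j <;>
        simp [mutateEx, swapAt, twistExchange, hww, hadj, hb, Prod.ext_iff]
  · subst hb
    by_cases hadj : L.Adj a b
    · rcases heps a with h1 | h1 <;> fin_cases i <;> fin_cases j <;>
        simp [mutateEx, swapAt, twistExchange, hww, hadj, ha, h1, Prod.ext_iff]
    · fin_cases i <;> fin_cases j <;>
        simp [mutateEx, swapAt, twistExchange, hww, hadj, ha, Prod.ext_iff]
  · by_cases haw : L.Adj a w <;> by_cases hwb : L.Adj w b <;>
      by_cases hab : L.Adj a b
    all_goals (
      first
      | (rcases heps a with h1 | h1 <;> rcases heps w with h2 | h2 <;>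
          first
          | (exact absurd (h1.trans h2.symm) (hbip a w haw))
          | (fin_cases i <;> fin_cases j <;>
              simp [mutateEx, swapAt, twistExchange, ha, hb, haw, hwb, hab,
                h1, h2, Prod.ext_iff]))
      | (fin_cases i <;> fin_cases j <;>
          simp [mutateEx, swapAt, twistExchange, ha, hb, haw, hwb, hab,
            Prod.ext_iff]))

lemma mubar_twist (heps : ∀ w, eps w = 0 ∨ eps w = 1)
    (hbip : ∀ u v, L.Adj u v → eps u ≠ eps v) (w : W) (x : W × Fin 2 → ℝ) :
    mubar w (twistExchange L eps, x) = (twistExchange L eps, Tstep L w x) := by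
  have hww : ¬ L.Adj w w := L.irrefl
  have hz : ∀ i j : Fin 2, twistExchange L eps (w,i) (w,j) = 0 := twist_same eps w
  have h01 : ((w, 0) : W × Fin 2) ≠ (w, 1) := by simp
  have f11 : ((1:Fin 2)+1) = 0 := by decide
  have f01 : ((0:Fin 2)+1) = 1 := by decide
  set B := twistExchange L eps with hBdef
  -- the once-mutated matrix agrees with `B` on the column and row of `(w,0)`
  have hcol : ∀ i, mutateEx B (w,1) i (w,0) = B i (w,0) := by
    intro i
    by_cases hi : i = (w,1) <;>
      simp [mutateEx, hi, hz, h01.symm]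
  have hrow : ∀ i, mutateEx B (w,1) (w,0) i = B (w,0) i := by
    intro i
    by_cases hi : i = (w,1) <;>
      simp [mutateEx, hi, hz, h01, h01.symm]
  set S := PP L 0 w x + PP L 1 w x with hSdef
  -- the label after the first mutation
  set x1 : W × Fin 2 → ℝ := fun j => if j = (w,1) then
      ((∏ i, x i ^ (B i (w,1)).toNat) + ∏ i, x i ^ (B (w,1) i).toNat) / x (w,1)
    else x j with hx1def
  have hnum1 : (∏ i, x i ^ (B i (w,1)).toNat) + (∏ i, x i ^ (B (w,1) i).toNat) = S := by
    rcases heps w with h2 | h2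
    · rw [prod_pow_eq_PP (L := L) x w 0 (fun i => B i (w,1))
          (fun i => by rw [hBdef, col_toNat heps hbip w 1 i]; simp [h2, f11, f01]),
        prod_pow_eq_PP (L := L) x w 1 (fun i => B (w,1) i)
          (fun i => by rw [hBdef, row_toNat heps w 1 i]; simp [h2, f11, f01])]
    · have h2' : ¬ (eps w = 0) := by rw [h2]; norm_num
      rw [prod_pow_eq_PP (L := L) x w 1 (fun i => B i (w,1))
          (fun i => by rw [hBdef, col_toNat heps hbip w 1 i]; simp [h2, f11, f01]),
        prod_pow_eq_PP (L := L) x w 0 (fun i => B (w,1) i)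
          (fun i => by rw [hBdef, row_toNat heps w 1 i]; simp [h2, f11, f01]),
        add_comm]
  have hx1w0 : x1 (w, 0) = x (w, 0) := by rw [hx1def]; simp [h01]
  have hx1off : ∀ v : W, L.Adj v w → ∀ c : Fin 2, x1 (v, c) = x (v, c) := by
    intro v hv c
    have : ((v, c) : W × Fin 2) ≠ (w, 1) := by simp [hv.ne]
    rw [hx1def]; simp [this]
  have hnum2 : (∏ i, x1 i ^ (B i (w,0)).toNat) + (∏ i, x1 i ^ (B (w,0) i).toNat) = S := by
    have e1 : ∀ c : Fin 2, PP L c w x1 = PP L c w x :=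
      fun c => PP_congr c w (fun v hv => hx1off v hv c)
    rcases heps w with h2 | h2
    · rw [prod_pow_eq_PP (L := L) x1 w 1 (fun i => B i (w,0))
          (fun i => by rw [hBdef, col_toNat heps hbip w 0 i]; simp [h2, f11, f01]),
        prod_pow_eq_PP (L := L) x1 w 0 (fun i => B (w,0) i)
          (fun i => by rw [hBdef, row_toNat heps w 0 i]; simp [h2, f11, f01]),
        e1 0, e1 1, add_comm]
    · have h2' : ¬ (eps w = 0) := by rw [h2]; norm_num
      rw [prod_pow_eq_PP (L := L) x1 w 0 (fun i => B i (w,0))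
          (fun i => by rw [hBdef, col_toNat heps hbip w 0 i]; simp [h2, f11, f01]),
        prod_pow_eq_PP (L := L) x1 w 1 (fun i => B (w,0) i)
          (fun i => by rw [hBdef, row_toNat heps w 0 i]; simp [h2, f11, f01]),
        e1 0, e1 1]
  have hkey : mubar w (B, x)
      = (fun p q => mutateEx (mutateEx B (w,1)) (w,0) (swapAt w p) (swapAt w q),
         fun p => (fun j => if j = (w,0) then
            ((∏ i, x1 i ^ ((mutateEx B (w,1)) i (w,0)).toNat)
              + ∏ i, x1 i ^ ((mutateEx B (w,1)) (w,0) i).toNat) / x1 (w,0)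
          else x1 j) (swapAt w p)) := rfl
  rw [hkey]
  refine Prod.ext ?_ ?_
  · exact matrix_invariant heps hbip w
  · funext p
    simp only
    have hmut : ((∏ i, x1 i ^ ((mutateEx B (w,1)) i (w,0)).toNat)
        + ∏ i, x1 i ^ ((mutateEx B (w,1)) (w,0) i).toNat) = S := by
      simp only [hcol, hrow]; exact hnum2
    obtain ⟨v, c⟩ := p
    by_cases hv : v = w
    · subst hv
      have hsw : swapAt v (v, c) = (v, c + 1) := by simp [swapAt]
      rw [hsw]
      have hc2 : c = 0 ∨ c = 1 := by fin_cases c; exacts [Or.inl rfl, Or.inr rfl]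
      rcases hc2 with rfl | rfl
      · have e0 : ((v, (0:Fin 2) + 1) : W × Fin 2) = (v, 1) := by rw [f01]
        have e1 : ((v, (1:Fin 2)) : W × Fin 2) ≠ (v, 0) := by simp
        rw [e0, if_neg e1, hx1def]
        simp only [if_pos rfl, hnum1, if_true]
        rw [Tstep_at, f01, ← hSdef]
      · have e0 : ((v, (1:Fin 2) + 1) : W × Fin 2) = (v, 0) := by rw [f11]
        rw [e0, if_pos rfl, hmut, hx1w0, Tstep_at, f11, ← hSdef]
    · have hsw : swapAt w (v, c) = (v, c) := by simp [swapAt, hv]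
      have e1 : ((v, c) : W × Fin 2) ≠ (w, 0) := by simp [hv]
      have e2 : ((v, c) : W × Fin 2) ≠ (w, 1) := by simp [hv]
      rw [hsw, if_neg e1, hx1def]
      simp only [if_neg e2]
      rw [Tstep_ne x (show ((v,c) : W × Fin 2).1 ≠ w from hv)]

lemma braid {u w : W} {x : W × Fin 2 → ℝ} (hx : ∀ p, 0 < x p) (huw : L.Adj u w) :
    Tstep L u (Tstep L w (Tstep L u (Tstep L w (Tstep L u (Tstep L w x))))) = x := by
  have hwu : L.Adj w u := huw.symm
  have hneuw : u ≠ w := huw.ne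
  have hnewu : w ≠ u := huw.ne'
  have f01 : ((0:Fin 2)+1) = 1 := by decide
  have f11 : ((1:Fin 2)+1) = 0 := by decide
  have ha0 : x (u,0) ≠ 0 := (hx _).ne'
  have ha1 : x (u,1) ≠ 0 := (hx _).ne'
  have hb0 : x (w,0) ≠ 0 := (hx _).ne'
  have hb1 : x (w,1) ≠ 0 := (hx _).ne'
  have hE0 : PP L 0 u x ≠ 0 := (PP_pos hx 0 u).ne'
  have hE1 : PP L 1 u x ≠ 0 := (PP_pos hx 1 u).ne'
  have hF0 : PP L 0 w x ≠ 0 := (PP_pos hx 0 w).ne'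
  have hF1 : PP L 1 w x ≠ 0 := (PP_pos hx 1 w).ne'
  have hE : PP L 0 u x + PP L 1 u x ≠ 0 := (add_pos (PP_pos hx 0 u) (PP_pos hx 1 u)).ne'
  have hF : PP L 0 w x + PP L 1 w x ≠ 0 := (add_pos (PP_pos hx 0 w) (PP_pos hx 1 w)).ne'
  set y1 := Tstep L w x with hy1
  set y2 := Tstep L u y1 with hy2
  set y3 := Tstep L w y2 with hy3
  set y4 := Tstep L u y3 with hy4
  set y5 := Tstep L w y4 with hy5
  set y6 := Tstep L u y5 with hy6
  -- stage 1
  have h1w0 : y1 (w, 0) = (PP L 0 w x + PP L 1 w x) / x (w, 1) := by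
    rw [hy1, Tstep_at, f01]
  have h1w1 : y1 (w, 1) = (PP L 0 w x + PP L 1 w x) / x (w, 0) := by
    rw [hy1, Tstep_at, f11]
  have h1u : ∀ c : Fin 2, y1 (u, c) = x (u, c) := fun c => by
    rw [hy1]; exact Tstep_ne x hneuw
  have hPF1 : ∀ c : Fin 2, PP L c w y1 = PP L c w x := fun c => by
    rw [hy1]; exact PP_Tstep_self x c w
  have hPE10 : PP L 0 u y1
      = PP L 0 u x * (PP L 0 w x + PP L 1 w x) / (x (w,0) * x (w,1)) := by
    have key := PP_Tstep_adj x hwu 0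
    rw [← hy1, h1w0] at key
    rw [eq_div_of_mul_eq hb0 key]
    field_simp
    try ring
  have hPE11 : PP L 1 u y1
      = PP L 1 u x * (PP L 0 w x + PP L 1 w x) / (x (w,0) * x (w,1)) := by
    have key := PP_Tstep_adj x hwu 1
    rw [← hy1, h1w1] at key
    rw [eq_div_of_mul_eq hb1 key]
    field_simp
    try ring
  -- stage 2
  have h2w : ∀ c : Fin 2, y2 (w, c) = y1 (w, c) := fun c => by
    rw [hy2]; exact Tstep_ne y1 hnewu
  have hPE2 : ∀ c : Fin 2, PP L c u y2 = PP L c u y1 := fun c => by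
    rw [hy2]; exact PP_Tstep_self y1 c u
  have h2u0 : y2 (u, 0) = (PP L 0 w x + PP L 1 w x) * (PP L 0 u x + PP L 1 u x)
      / (x (w,0) * x (w,1) * x (u,1)) := by
    rw [hy2, Tstep_at, f01, hPE10, hPE11, h1u 1]
    field_simp
    try ring
  have h2u1 : y2 (u, 1) = (PP L 0 w x + PP L 1 w x) * (PP L 0 u x + PP L 1 u x)
      / (x (w,0) * x (w,1) * x (u,0)) := by
    rw [hy2, Tstep_at, f11, hPE10, hPE11, h1u 0]
    field_simp
    try ring
  have hPF20 : PP L 0 w y2 = PP L 0 w x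
      * ((PP L 0 w x + PP L 1 w x) * (PP L 0 u x + PP L 1 u x))
      / (x (w,0) * x (w,1) * (x (u,0) * x (u,1))) := by
    have key := PP_Tstep_adj y1 huw 0
    rw [← hy2, hPF1 0, h1u 0, h2u0] at key
    rw [eq_div_of_mul_eq ha0 key]
    field_simp
    try ring
  have hPF21 : PP L 1 w y2 = PP L 1 w x
      * ((PP L 0 w x + PP L 1 w x) * (PP L 0 u x + PP L 1 u x))
      / (x (w,0) * x (w,1) * (x (u,0) * x (u,1))) := by
    have key := PP_Tstep_adj y1 huw 1
    rw [← hy2, hPF1 1, h1u 1, h2u1] at key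
    rw [eq_div_of_mul_eq ha1 key]
    field_simp
    try ring
  -- stage 3
  have h3u : ∀ c : Fin 2, y3 (u, c) = y2 (u, c) := fun c => by
    rw [hy3]; exact Tstep_ne y2 hneuw
  have hPF3 : ∀ c : Fin 2, PP L c w y3 = PP L c w y2 := fun c => by
    rw [hy3]; exact PP_Tstep_self y2 c w
  have h3w0 : y3 (w, 0) = (PP L 0 w x + PP L 1 w x) * (PP L 0 u x + PP L 1 u x)
      / (x (u,0) * x (u,1) * x (w,1)) := by
    rw [hy3, Tstep_at, f01, hPF20, hPF21, h2w 1, h1w1]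
    field_simp
    try ring
  have h3w1 : y3 (w, 1) = (PP L 0 w x + PP L 1 w x) * (PP L 0 u x + PP L 1 u x)
      / (x (u,0) * x (u,1) * x (w,0)) := by
    rw [hy3, Tstep_at, f11, hPF20, hPF21, h2w 0, h1w0]
    field_simp
    try ring
  have hq10 : y1 (w, 0) ≠ 0 := by
    rw [h1w0]; exact div_ne_zero hF hb1
  have hq11 : y1 (w, 1) ≠ 0 := by
    rw [h1w1]; exact div_ne_zero hF hb0
  have hPE30 : PP L 0 u y3 = PP L 0 u x
      * ((PP L 0 w x + PP L 1 w x) * (PP L 0 u x + PP L 1 u x))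
      / (x (w,0) * x (w,1) * (x (u,0) * x (u,1))) := by
    have key := PP_Tstep_adj y2 hwu 0
    rw [← hy3, hPE2 0, hPE10, h2w 0, h3w0] at key
    rw [eq_div_of_mul_eq hq10 key, h1w0]
    field_simp
    try ring
  have hPE31 : PP L 1 u y3 = PP L 1 u x
      * ((PP L 0 w x + PP L 1 w x) * (PP L 0 u x + PP L 1 u x))
      / (x (w,0) * x (w,1) * (x (u,0) * x (u,1))) := by
    have key := PP_Tstep_adj y2 hwu 1
    rw [← hy3, hPE2 1, hPE11, h2w 1, h3w1] at key
    rw [eq_div_of_mul_eq hq11 key, h1w1]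
    field_simp
    try ring
  -- stage 4
  have h4w : ∀ c : Fin 2, y4 (w, c) = y3 (w, c) := fun c => by
    rw [hy4]; exact Tstep_ne y3 hnewu
  have hPE4 : ∀ c : Fin 2, PP L c u y4 = PP L c u y3 := fun c => by
    rw [hy4]; exact PP_Tstep_self y3 c u
  have h4u0 : y4 (u, 0) = (PP L 0 u x + PP L 1 u x) / x (u,1) := by
    rw [hy4, Tstep_at, f01, hPE30, hPE31, h3u 1, h2u1]
    field_simp
    try ring
  have h4u1 : y4 (u, 1) = (PP L 0 u x + PP L 1 u x) / x (u,0) := by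
    rw [hy4, Tstep_at, f11, hPE30, hPE31, h3u 0, h2u0]
    field_simp
    try ring
  have hq20 : y2 (u, 0) ≠ 0 := by
    rw [h2u0]
    exact div_ne_zero (mul_ne_zero hF hE) (mul_ne_zero (mul_ne_zero hb0 hb1) ha1)
  have hq21 : y2 (u, 1) ≠ 0 := by
    rw [h2u1]
    exact div_ne_zero (mul_ne_zero hF hE) (mul_ne_zero (mul_ne_zero hb0 hb1) ha0)
  have hPF40 : PP L 0 w y4 = PP L 0 w x * (PP L 0 u x + PP L 1 u x)
      / (x (u,0) * x (u,1)) := by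
    have key := PP_Tstep_adj y3 huw 0
    rw [← hy4, hPF3 0, hPF20, h3u 0, h4u0] at key
    rw [eq_div_of_mul_eq hq20 key, h2u0]
    field_simp
    try ring
  have hPF41 : PP L 1 w y4 = PP L 1 w x * (PP L 0 u x + PP L 1 u x)
      / (x (u,0) * x (u,1)) := by
    have key := PP_Tstep_adj y3 huw 1
    rw [← hy4, hPF3 1, hPF21, h3u 1, h4u1] at key
    rw [eq_div_of_mul_eq hq21 key, h2u1]
    field_simp
    try ring
  -- stage 5
  have h5u : ∀ c : Fin 2, y5 (u, c) = y4 (u, c) := fun c => by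
    rw [hy5]; exact Tstep_ne y4 hneuw
  have h5w0 : y5 (w, 0) = x (w, 0) := by
    rw [hy5, Tstep_at, f01, hPF40, hPF41, h4w 1, h3w1]
    field_simp
    try ring
  have h5w1 : y5 (w, 1) = x (w, 1) := by
    rw [hy5, Tstep_at, f11, hPF40, hPF41, h4w 0, h3w0]
    field_simp
    try ring
  have hq30 : y3 (w, 0) ≠ 0 := by
    rw [h3w0]
    exact div_ne_zero (mul_ne_zero hF hE) (mul_ne_zero (mul_ne_zero ha0 ha1) hb1)
  have hq31 : y3 (w, 1) ≠ 0 := by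
    rw [h3w1]
    exact div_ne_zero (mul_ne_zero hF hE) (mul_ne_zero (mul_ne_zero ha0 ha1) hb0)
  have hPE50 : PP L 0 u y5 = PP L 0 u x := by
    have key := PP_Tstep_adj y4 hwu 0
    rw [← hy5, hPE4 0, hPE30, h4w 0, h5w0] at key
    rw [eq_div_of_mul_eq hq30 key, h3w0]
    field_simp
    try ring
  have hPE51 : PP L 1 u y5 = PP L 1 u x := by
    have key := PP_Tstep_adj y4 hwu 1
    rw [← hy5, hPE4 1, hPE31, h4w 1, h5w1] at key
    rw [eq_div_of_mul_eq hq31 key, h3w1]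
    field_simp
    try ring
  -- stage 6
  have h6u0 : y6 (u, 0) = x (u, 0) := by
    rw [hy6, Tstep_at, f01, hPE50, hPE51, h5u 1, h4u1]
    rw [div_div_eq_mul_div, mul_comm, mul_div_assoc, div_self hE, mul_one]
  have h6u1 : y6 (u, 1) = x (u, 1) := by
    rw [hy6, Tstep_at, f11, hPE50, hPE51, h5u 0, h4u0]
    rw [div_div_eq_mul_div, mul_comm, mul_div_assoc, div_self hE, mul_one]
  have h6off : ∀ p : W × Fin 2, p.1 ≠ u → p.1 ≠ w → y6 p = x p := by
    intro p hpu hpw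
    rw [hy6, Tstep_ne _ hpu, hy5, Tstep_ne _ hpw, hy4, Tstep_ne _ hpu,
      hy3, Tstep_ne _ hpw, hy2, Tstep_ne _ hpu, hy1, Tstep_ne _ hpw]
  funext p
  obtain ⟨v, c⟩ := p
  show y6 (v, c) = x (v, c)
  by_cases hvu : v = u
  · subst hvu
    have hc2 : c = 0 ∨ c = 1 := by fin_cases c; exacts [Or.inl rfl, Or.inr rfl]
    rcases hc2 with rfl | rfl
    · exact h6u0
    · exact h6u1
  · by_cases hvw : v = w
    · subst hvw
      rw [hy6, Tstep_ne y5 (show ((v, c) : W × Fin 2).1 ≠ u from hvu)]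
      have hc2 : c = 0 ∨ c = 1 := by fin_cases c; exacts [Or.inl rfl, Or.inr rfl]
      rcases hc2 with rfl | rfl
      · exact h5w0
      · exact h5w1
    · exact h6off (v, c) hvu hvw

end TwistAux

/-- the operations `μ̄_w` on the twist labeled quiver `(B_Λ, x)` satisfy the
Coxeter relations of `Λ`. -/
theorem twist_coxeter_relations
    {W : Type} [Fintype W] [DecidableEq W]
    (L : SimpleGraph W) [DecidableRel L.Adj] (hADE : IsADE L)
    (eps : W → ℤ) (heps : ∀ w, eps w = 0 ∨ eps w = 1)
    (hbip : ∀ u v, L.Adj u v → eps u ≠ eps v)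
    (x : W × Fin 2 → ℝ) (hx : ∀ v, 0 < x v) (u w : W) :
    (L.Adj u w →
      mubar u (mubar w (mubar u (mubar w (mubar u (mubar w (twistExchange L eps, x)))))) =
        (twistExchange L eps, x)) ∧
    (u ≠ w → ¬L.Adj u w →
      mubar u (mubar w (mubar u (mubar w (twistExchange L eps, x)))) =
        (twistExchange L eps, x)) := by
  constructor
  · intro hadj
    rw [mubar_twist heps hbip w x, mubar_twist heps hbip u _, mubar_twist heps hbip w _,
        mubar_twist heps hbip u _, mubar_twist heps hbip w _, mubar_twist heps hbip u _,
        braid hx hadj]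
  · intro hne hnadj
    rw [mubar_twist heps hbip w x, mubar_twist heps hbip u _, mubar_twist heps hbip w _,
        mubar_twist heps hbip u _]
    have h1 : Tstep L w (Tstep L u (Tstep L w x)) = Tstep L u (Tstep L w (Tstep L w x)) :=
      (Tstep_comm (Tstep L w x) hne hnadj).symm
    rw [h1, Tstep_invol hx w, Tstep_invol hx u]
end
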